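/- arXiv:2507.03800 — 7 statements merged into one kernel-verified Lean document; each statement's English description precedes it below -/
import Mathlib

section
/- For every n ≥ 1, the n-th univariate Eulerian polynomial A_n is palindromic, i.e. E(n+1,k) = E(n+1,n-k) for all 0 ≤ k ≤ n, and A_n splits over the reals with all of its roots real and strictly negative. -/
/-!
Reversing the values of a permutation exchanges descents and ascents, which gives the symmetry
`E(n+1,k) = E(n+1,n-k)`.

Inserting the largest letter into the `n + 2` gaps of a permutation `τ ∈ S_{n+1}` with `d`
descents produces `d + 1` permutations with `d` descents and `n + 1 - d` with `d + 1`, whence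
`A_{n+1} = (1 + (n+1) x) A_n + x (1 - x) A_n'`. Equivalently, `A_{n+1}(x) / (1 - x)^(n+3)` is the
derivative of `h(x) = x A_n(x) / (1 - x)^(n+2)`. If `A_n` has `n` distinct negative roots, then `h`
vanishes at them and at `0`, and tends to `0` at `-∞`, so Rolle's theorem produces `n + 1` distinct
negative roots of `A_{n+1}`, which has degree at most `n + 1`. Since the coefficients of `A_n` are
nonnegative and `A_n(0) = 1`, it has no roots in `[0, ∞)`.
-/

/-- Number of descents of a permutation of `Fin (n+1)` (positions `1,...,n` in 1-based terms). -/
def descents (n : ℕ) (σ : Equiv.Perm (Fin (n + 1))) : ℕ :=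
  (Finset.univ.filter fun i : Fin n => σ i.succ < σ i.castSucc).card

/-- Eulerian number `E(n+1,k)`: number of permutations of `{1,...,n+1}` with exactly `k`
descents. -/
def eulerianNumber (n k : ℕ) : ℕ :=
  (Finset.univ.filter fun σ : Equiv.Perm (Fin (n + 1)) => descents n σ = k).card

/-- The `n`-th univariate Eulerian polynomial `A_n(x) = Σ_{σ ∈ S_{n+1}} x^{des σ}`. -/
noncomputable def eulerianPoly (n : ℕ) : Polynomial ℝ :=
  ∑ σ : Equiv.Perm (Fin (n + 1)), Polynomial.X ^ descents n σ

open Polynomial Finset Filter Set Topology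

section Words

variable {α β : Type*} [LinearOrder α] [LinearOrder β] {m : ℕ}

def descentCount (w : Fin (m + 1) → α) : ℕ :=
  #{i : Fin m | w i.succ < w i.castSucc}

lemma descents_eq_descentCount (n : ℕ) (σ : Equiv.Perm (Fin (n + 1))) :
    descents n σ = descentCount σ := rfl

lemma descentCount_le (w : Fin (m + 1) → α) : descentCount w ≤ m :=
  (card_filter_le _ _).trans_eq (card_fin m)

lemma descentCount_comp_of_strictMono {f : α → β} (hf : StrictMono f) (w : Fin (m + 1) → α) :
    descentCount (f ∘ w) = descentCount w := by
  simp only [descentCount, Function.comp_apply, hf.lt_iff_lt]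

lemma descentCount_comp_add_descentCount_of_strictAnti {f : α → β} (hf : StrictAnti f)
    {w : Fin (m + 1) → α} (hw : Function.Injective w) :
    descentCount (f ∘ w) + descentCount w = m := by
  have hcompl : ∀ i : Fin m, f (w i.succ) < f (w i.castSucc) ↔ ¬ w i.succ < w i.castSucc :=
    fun i => by
      rw [hf.lt_iff_gt, not_lt, lt_iff_le_and_ne]
      exact and_iff_left (hw.ne (Fin.castSucc_lt_succ).ne)
  simp only [descentCount, Function.comp_apply, hcompl]
  rw [add_comm, card_filter_add_card_filter_not, card_univ, Fintype.card_fin]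

lemma descentCount_cons (a : α) (w : Fin (m + 1) → α) :
    descentCount (Fin.cons a w : Fin (m + 2) → α) = descentCount w + if w 0 < a then 1 else 0 := by
  simp only [descentCount, card_filter, Fin.sum_univ_succ,
    Fin.castSucc_zero, Fin.cons_zero, ← Fin.succ_castSucc, Fin.cons_succ]
  ring

variable {R : Type*} [CommSemiring R]

lemma sum_pow_descentCount_insertNth_succ (x : R) {M : α} (w : Fin (m + 1) → α)
    (hM : ∀ i, w i < M) :
    ∑ j : Fin (m + 1), x ^ descentCount (Fin.insertNth j.succ M w) =
      (descentCount w + 1) • x ^ descentCount w +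
        (m - descentCount w) • x ^ (descentCount w + 1) := by
  -- Only the slots `j.succ` recurse along `Fin.cons`, via `Fin.insertNth_succ_cons`; slot `0`
  -- always adds one descent and is added back in `sum_pow_descentCount_insertNth`.
  induction m with
  | zero =>
    rw [Fin.sum_univ_one, show (0 : Fin 1).succ = Fin.last 1 from rfl, Fin.insertNth_last']
    simp [descentCount, Fin.snoc, fun i => not_lt.2 (hM i).le]
  | succ m ih =>
    obtain ⟨a, v, rfl⟩ : ∃ a v, w = Fin.cons a v := ⟨w 0, Fin.tail w, (Fin.cons_self_tail w).symm⟩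
    have hvM : ∀ i, v i < M := fun i => by simpa using hM i.succ
    have haM : a < M := by simpa using hM 0
    have hv0 (j : Fin (m + 1)) : (Fin.insertNth j.succ M v : Fin (m + 2) → α) 0 = v 0 := by
      rw [← Fin.succ_succAbove_zero j, Fin.insertNth_apply_succAbove]
    simp only [Fin.insertNth_succ_cons, descentCount_cons, Fin.sum_univ_succ (n := m + 1),
      Fin.insertNth_zero', Fin.cons_zero, not_lt.2 haM.le, if_false, hv0, pow_add, ← sum_mul,
      ih v hvM, hvM 0, if_true]
    obtain ⟨k, hk⟩ := Nat.exists_eq_add_of_le (descentCount_le v)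
    split_ifs <;> simp only [add_zero, pow_zero, pow_one, nsmul_eq_mul,
      show m - descentCount v = k by omega, show m + 1 - descentCount v = k + 1 by omega,
      show m + 1 - (descentCount v + 1) = k by omega] <;> push_cast <;> ring

lemma sum_pow_descentCount_insertNth (x : R) {M : α} (w : Fin (m + 1) → α) (hM : ∀ i, w i < M) :
    ∑ j : Fin (m + 2), x ^ descentCount (Fin.insertNth j M w) =
      (descentCount w + 1) • x ^ descentCount w +
        (m + 1 - descentCount w) • x ^ (descentCount w + 1) := by
  rw [Fin.sum_univ_succ, sum_pow_descentCount_insertNth_succ x w hM, Fin.insertNth_zero',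
    descentCount_cons, if_pos (hM 0), show m + 1 - descentCount w = m - descentCount w + 1 by
      have := descentCount_le w; omega]
  simp only [add_nsmul, one_nsmul]
  abel

end Words

section Insertion

variable {n : ℕ}

def insertTop (j : Fin (n + 2)) (τ : Equiv.Perm (Fin (n + 1))) : Equiv.Perm (Fin (n + 2)) :=
  ((finSuccEquiv' j).trans (Equiv.optionCongr τ)).trans (finSuccEquiv' (Fin.last (n + 1))).symm

lemma coe_insertTop (j : Fin (n + 2)) (τ : Equiv.Perm (Fin (n + 1))) :
    ⇑(insertTop j τ) = Fin.insertNth j (Fin.last (n + 1)) (Fin.castSucc ∘ τ) := by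
  ext i
  cases i using Fin.succAboveCases j <;> simp [insertTop, Fin.succAbove_last]

lemma insertTop_bijective :
    Function.Bijective fun p : Fin (n + 2) × Equiv.Perm (Fin (n + 1)) => insertTop p.1 p.2 := by
  refine (Fintype.bijective_iff_injective_and_card _).2 ⟨?_, ?_⟩
  · rintro ⟨j, τ⟩ ⟨j', τ'⟩ h
    have h' : (Fin.insertNth j (Fin.last (n + 1)) (Fin.castSucc ∘ τ) : Fin (n + 2) → Fin (n + 2)) =
        Fin.insertNth j' (Fin.last (n + 1)) (Fin.castSucc ∘ τ') := by
      simpa only [coe_insertTop] using congrArg DFunLike.coe h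
    obtain rfl : j = j' := (insertTop j' τ').injective <| by
      simp only [coe_insertTop, ← h', Fin.insertNth_apply_same]
    obtain ⟨-, hτ⟩ := Fin.insertNth_injective2 h'
    simp only [Prod.mk.injEq, true_and]
    exact Equiv.ext fun i => Fin.castSucc_injective _ (congrFun hτ i)
  · simp [Fintype.card_perm, Nat.factorial_succ]

end Insertion

lemma X_mul_derivative_X_pow {R : Type*} [CommSemiring R] (d : ℕ) :
    (X : R[X]) * derivative (X ^ d) = (d : R[X]) * X ^ d := by
  rcases d with _ | d
  · simp
  · rw [derivative_X_pow, C_eq_natCast, Nat.add_sub_cancel, pow_succ]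
    ring

theorem eulerianPoly_succ (n : ℕ) :
    eulerianPoly (n + 1) =
      (1 + ((n : ℝ[X]) + 1) * X) * eulerianPoly n + X * (1 - X) * derivative (eulerianPoly n) := by
  rw [eulerianPoly, ← Fintype.sum_bijective _ insertTop_bijective _ _ fun _ => rfl,
    Fintype.sum_prod_type_right, eulerianPoly, mul_sum, derivative_sum, mul_sum,
    ← sum_add_distrib]
  refine sum_congr rfl fun τ _ => ?_
  simp only [descents_eq_descentCount, coe_insertTop]
  rw [sum_pow_descentCount_insertNth _ (Fin.castSucc ∘ τ) fun i => Fin.castSucc_lt_last (τ i),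
    descentCount_comp_of_strictMono (Fin.strictMono_castSucc), mul_assoc X, mul_left_comm X,
    X_mul_derivative_X_pow, nsmul_eq_mul, nsmul_eq_mul,
    Nat.cast_sub ((descentCount_le _).trans n.le_succ)]
  push_cast
  ring

lemma descents_trans_revPerm {n : ℕ} (σ : Equiv.Perm (Fin (n + 1))) :
    descents n (σ.trans Fin.revPerm) = n - descents n σ := by
  have := descentCount_comp_add_descentCount_of_strictAnti Fin.rev_strictAnti σ.injective
  change descentCount (Fin.rev ∘ σ) = n - descentCount σ
  omega

theorem eulerianNumber_eq_eulerianNumber_sub {n k : ℕ} (hk : k ≤ n) :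
    eulerianNumber n k = eulerianNumber n (n - k) := by
  have hinv (σ : Equiv.Perm (Fin (n + 1))) : (σ.trans Fin.revPerm).trans Fin.revPerm = σ := by
    ext; simp
  refine card_bij' (fun σ _ => σ.trans Fin.revPerm) (fun σ _ => σ.trans Fin.revPerm) ?_ ?_
    (fun σ _ => hinv σ) (fun σ _ => hinv σ) <;>
  · intro σ hσ
    simp only [mem_filter, Finset.mem_univ, true_and, descents_trans_revPerm] at hσ ⊢
    omega

lemma descents_one (n : ℕ) : descents n 1 = 0 := by
  simp [descents, fun i : Fin n => (Fin.castSucc_lt_succ (i := i)).not_gt]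

lemma eval_eulerianPoly_pos (n : ℕ) {x : ℝ} (hx : 0 ≤ x) : 0 < (eulerianPoly n).eval x := by
  rw [eulerianPoly, eval_finsetSum]
  exact sum_pos' (fun σ _ => by simpa using pow_nonneg hx _)
    ⟨1, mem_univ _, by simp [descents_one]⟩

lemma eulerianPoly_ne_zero (n : ℕ) : eulerianPoly n ≠ 0 := fun h => by
  simpa [h] using eval_eulerianPoly_pos n le_rfl

lemma neg_of_mem_roots_eulerianPoly {n : ℕ} {r : ℝ} (hr : r ∈ (eulerianPoly n).roots) : r < 0 :=
  not_le.1 fun h => (eval_eulerianPoly_pos n h).ne' (isRoot_of_mem_roots hr)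

lemma natDegree_eulerianPoly_le (n : ℕ) : (eulerianPoly n).natDegree ≤ n :=
  natDegree_sum_le_of_forall_le _ _ fun σ _ =>
    (natDegree_X_pow_le _).trans (descentCount_le (σ : Fin (n + 1) → Fin (n + 1)))

theorem exists_lt_hasDerivAt_eq_zero_of_tendsto_atBot {f f' : ℝ → ℝ} {b l : ℝ}
    (hff' : ∀ x < b, HasDerivAt f (f' x) x) (hbot : Tendsto f atBot (𝓝 l))
    (hb : Tendsto f (𝓝[<] b) (𝓝 l)) : ∃ c < b, f' c = 0 := by
  set φ : ℝ → ℝ := fun u => b + 1 - u⁻¹ with hφ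
  have hφb : ∀ u ∈ Ioo (0 : ℝ) 1, φ u < b := fun u hu => by
    have : 1 < u⁻¹ := one_lt_inv_iff₀.2 hu
    simp only [hφ]; linarith
  have hφ0 : Tendsto φ (𝓝[>] 0) atBot :=
    tendsto_atBot_add_const_left _ _ (tendsto_neg_atTop_atBot.comp tendsto_inv_nhdsGT_zero)
  have hφ1 : Tendsto φ (𝓝[<] 1) (𝓝[<] b) := by
    refine tendsto_nhdsWithin_of_tendsto_nhds_of_eventually_within _ ?_ ?_
    · have : ContinuousAt φ 1 := continuousAt_const.sub (continuousAt_inv₀ one_ne_zero)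
      simpa [hφ, ContinuousAt] using this.tendsto.mono_left nhdsWithin_le_nhds
    · filter_upwards [Ioo_mem_nhdsLT (zero_lt_one' ℝ)] with u hu using hφb u hu
  have hderiv : ∀ u ∈ Ioo (0 : ℝ) 1, HasDerivAt (f ∘ φ) (f' (φ u) * (u ^ 2)⁻¹) u := fun u hu =>
    (hff' _ (hφb u hu)).comp u <| by
      simpa [hφ, sub_eq_add_neg] using (hasDerivAt_inv hu.1.ne').neg.const_add (b + 1)
  obtain ⟨c, hc, hc0⟩ := exists_hasDerivAt_eq_zero' zero_lt_one (hbot.comp hφ0) (hb.comp hφ1) hderiv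
  exact ⟨φ c, hφb c hc, (mul_eq_zero.1 hc0).resolve_right (by have := hc.1; positivity)⟩

/-- For `|s| < 1` this is `∑ k, k ^ (n + 1) * s ^ k`, and `s * d/ds` raises the exponent of `k`
by one: this is where `hasDerivAt_eulerianFrac` comes from. -/
noncomputable def eulerianFrac (n : ℕ) (s : ℝ) : ℝ :=
  s * (eulerianPoly n).eval s / (1 - s) ^ (n + 2)

lemma hasDerivAt_eulerianFrac (n : ℕ) {t : ℝ} (ht : t ≠ 1) :
    HasDerivAt (eulerianFrac n) ((eulerianPoly (n + 1)).eval t / (1 - t) ^ (n + 3)) t := by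
  have h1t : 1 - t ≠ 0 := sub_ne_zero.2 ht.symm
  have hnum := (hasDerivAt_id' t).fun_mul ((eulerianPoly n).hasDerivAt t)
  have hden := ((hasDerivAt_id' t).const_sub 1).fun_pow (n + 2)
  refine (hnum.fun_div hden (pow_ne_zero _ h1t)).congr_deriv ?_
  rw [eulerianPoly_succ]
  simp only [eval_add, eval_mul, eval_one, eval_X, eval_sub, eval_natCast]
  field_simp
  push_cast
  ring

lemma tendsto_eulerianFrac_atBot (n : ℕ) : Tendsto (eulerianFrac n) atBot (𝓝 0) := by
  have hdeg : (X * eulerianPoly n).degree < ((1 - X) ^ (n + 2) : ℝ[X]).degree := by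
    calc (X * eulerianPoly n).degree ≤ ((n + 1 : ℕ) : WithBot ℕ) :=
          degree_le_of_natDegree_le <| natDegree_mul_le.trans <| by
            rw [natDegree_X, add_comm]; gcongr; exact natDegree_eulerianPoly_le n
      _ < ((n + 2 : ℕ) : WithBot ℕ) := by exact_mod_cast n.succ_lt_succ n.lt_succ_self
      _ = ((1 - X) ^ (n + 2) : ℝ[X]).degree := by
        rw [degree_pow, ← neg_sub, degree_neg, ← C_1, degree_X_sub_C]; simp
  exact (div_tendsto_atBot_zero_of_degree_lt _ _ hdeg).congr fun s => by simp [eulerianFrac]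

lemma exists_isRoot_eulerianPoly_succ_mem_Ioo {n : ℕ} {x y : ℝ} (hxy : x < y) (hy : y ≤ 0)
    (hx0 : eulerianFrac n x = 0) (hy0 : eulerianFrac n y = 0) :
    ∃ z ∈ Ioo x y, (eulerianPoly (n + 1)).IsRoot z := by
  have hderiv : ∀ t ≤ y, HasDerivAt (eulerianFrac n) _ t := fun t ht =>
    hasDerivAt_eulerianFrac n (by linarith)
  obtain ⟨z, hz, hz0⟩ := exists_hasDerivAt_eq_zero hxy
    (fun t ht => (hderiv t ht.2).continuousAt.continuousWithinAt) (hx0.trans hy0.symm)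
    fun t ht => hderiv t ht.2.le
  exact ⟨z, hz, (div_eq_zero_iff.1 hz0).resolve_right (pow_ne_zero _ (by linarith [hz.2]))⟩

lemma exists_isRoot_eulerianPoly_succ_lt {n : ℕ} {b : ℝ} (hb : b ≤ 0)
    (hb0 : eulerianFrac n b = 0) : ∃ c < b, (eulerianPoly (n + 1)).IsRoot c := by
  have hderiv : ∀ t ≤ b, HasDerivAt (eulerianFrac n) _ t := fun t ht =>
    hasDerivAt_eulerianFrac n (by linarith)
  obtain ⟨c, hc, hc0⟩ := exists_lt_hasDerivAt_eq_zero_of_tendsto_atBot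
    (fun t ht => hderiv t ht.le) (tendsto_eulerianFrac_atBot n)
    (hb0 ▸ (hderiv b le_rfl).continuousAt.tendsto.mono_left nhdsWithin_le_nhds)
  exact ⟨c, hc, (div_eq_zero_iff.1 hc0).resolve_right (pow_ne_zero _ (by linarith))⟩

lemma le_card_roots_toFinset_eulerianPoly_succ {n : ℕ}
    (h : n ≤ (eulerianPoly n).roots.toFinset.card) :
    n + 1 ≤ (eulerianPoly (n + 1)).roots.toFinset.card := by
  set s := insert 0 (eulerianPoly n).roots.toFinset
  have hs_card : n + 1 ≤ s.card := by
    rw [card_insert_of_notMem fun h0 =>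
      (neg_of_mem_roots_eulerianPoly (Multiset.mem_toFinset.1 h0)).false]
    omega
  have hs_nonpos : ∀ x ∈ s, x ≤ 0 := by
    simpa [s] using fun x hx => (neg_of_mem_roots_eulerianPoly hx).le
  have hs_zero : ∀ x ∈ s, eulerianFrac n x = 0 := by
    simp +contextual [s, eulerianFrac]
  have hs : s.Nonempty := insert_nonempty _ _
  obtain ⟨c, hc, hcq⟩ :=
    exists_isRoot_eulerianPoly_succ_lt (hs_nonpos _ (s.min'_mem hs)) (hs_zero _ (s.min'_mem hs))
  have hq := eulerianPoly_ne_zero (n + 1)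
  set t := (eulerianPoly (n + 1)).roots.toFinset.filter (c < ·)
  have hst : s.card ≤ t.card + 1 := card_le_of_interleaved fun x hx y hy hxy _ => by
    obtain ⟨z, hz, hzq⟩ := exists_isRoot_eulerianPoly_succ_mem_Ioo hxy (hs_nonpos y hy)
      (hs_zero x hx) (hs_zero y hy)
    exact ⟨z, mem_filter.2 ⟨Multiset.mem_toFinset.2 ((mem_roots hq).2 hzq),
      (hc.trans_le (s.min'_le x hx)).trans hz.1⟩, hz⟩
  calc n + 1 ≤ t.card + 1 := hs_card.trans hst
    _ = (insert c t).card := (card_insert_of_notMem (by simp [t])).symm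
    _ ≤ _ := card_le_card <|
      insert_subset (Multiset.mem_toFinset.2 ((mem_roots hq).2 hcq)) (filter_subset _ _)

lemma le_card_roots_toFinset_eulerianPoly (n : ℕ) : n ≤ (eulerianPoly n).roots.toFinset.card := by
  induction n with
  | zero => exact Nat.zero_le _
  | succ n ih => exact le_card_roots_toFinset_eulerianPoly_succ ih

theorem splits_eulerianPoly (n : ℕ) : (eulerianPoly n).Splits :=
  splits_iff_card_roots.2 <| le_antisymm (card_roots' _) <|
    (natDegree_eulerianPoly_le n).trans <|
      (le_card_roots_toFinset_eulerianPoly n).trans (Multiset.toFinset_card_le _)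

theorem stmt0_general (n : ℕ) :
    (∀ k ≤ n, eulerianNumber n k = eulerianNumber n (n - k)) ∧
    Polynomial.Splits (eulerianPoly n) ∧
    ∀ r ∈ (eulerianPoly n).roots, r < 0 :=
  ⟨fun _ => eulerianNumber_eq_eulerianNumber_sub, splits_eulerianPoly n,
    fun _ => neg_of_mem_roots_eulerianPoly⟩

/-- For every `n ≥ 1`, the `n`-th Eulerian polynomial is palindromic, i.e.
`E(n+1,k) = E(n+1,n-k)` for `0 ≤ k ≤ n`, and it splits over the reals with all of its roots
real and strictly negative. -/
theorem stmt0 (n : ℕ) (hn : 1 ≤ n) :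
    (∀ k ≤ n, eulerianNumber n k = eulerianNumber n (n - k)) ∧
    Polynomial.Splits (eulerianPoly n) ∧
    ∀ r ∈ (eulerianPoly n).roots, r < 0 :=
  stmt0_general n
end

section
/- Let p ∈ ℝ[x_1,...,x_n] be a real zero polynomial. Then the Euclidean closure of the connected component of the origin in {a ∈ ℝ^n : p(a) ≠ 0} equals the set {a ∈ ℝ^n : p(λa) ≠ 0 for all λ ∈ [0,1)}. -/
/-!
Restricted to a ray `t ↦ t • a`, a real zero polynomial becomes a univariate polynomial all of
whose complex roots are real. If none of them lies in `[0, 1)`, comparing the linear factors root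
by root gives `|p(t a)| ≥ (1 - t)^d |p(0)|` on `[0, 1)`, with `d` the total degree independent of
`a`. Hence the set of `a` whose segment `[0, a)` avoids the zeros of `p` is closed. Its points
with `p(a) ≠ 0` form an open set, so it meets `{p ≠ 0}` in a clopen piece containing the
connected component of the origin, while each segment `[0, a)` lies in that component.
-/

open Polynomial Set Topology

theorem Polynomial.pow_natDegree_mul_norm_eval_le {K : Type*} [NormedField K] [IsAlgClosed K]
    {q : K[X]} {z w : K} {c : ℝ} (hc : 0 ≤ c) (h : ∀ r ∈ q.roots, c * ‖z - r‖ ≤ ‖w - r‖) :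
    c ^ q.natDegree * ‖q.eval z‖ ≤ ‖q.eval w‖ := by
  have hsplit := IsAlgClosed.splits q
  have norm_prod (x : K) : ‖(q.roots.map (x - ·)).prod‖ = (q.roots.map (‖x - ·‖)).prod := by
    rw [← normHom_apply, map_multiset_prod, Multiset.map_map]; rfl
  rw [hsplit.eval_eq_prod_roots, hsplit.eval_eq_prod_roots, norm_mul, norm_mul, mul_left_comm,
    norm_prod, norm_prod, hsplit.natDegree_eq_card_roots, ← Multiset.prod_replicate,
    ← Multiset.map_const', ← Multiset.prod_map_mul]
  gcongr
  exact Multiset.prod_map_le_prod_map₀ _ _ (fun _ _ => by positivity) h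

theorem MvPolynomial.natDegree_aeval_le_totalDegree {R S σ : Type*} [CommSemiring R]
    [CommSemiring S] [Algebra R S] (p : MvPolynomial σ R) {g : σ → S[X]}
    (hg : ∀ i, (g i).natDegree ≤ 1) : (aeval g p).natDegree ≤ p.totalDegree := by
  conv_lhs => rw [p.as_sum, map_sum]
  refine natDegree_sum_le_of_forall_le _ _ fun v hv => ?_
  refine le_trans ?_ (le_totalDegree hv)
  rw [aeval_monomial, Polynomial.algebraMap_apply]
  refine natDegree_C_mul_le _ _ |>.trans <| natDegree_prod_le _ _ |>.trans <|
    Finset.sum_le_sum fun i _ => natDegree_pow_le.trans ?_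
  simpa using Nat.mul_le_mul_left (v i) (hg i)

theorem one_sub_mul_abs_le_abs_sub {r t : ℝ} (hr : r < 0 ∨ 1 ≤ r) (ht : t ∈ Icc 0 1) :
    (1 - t) * |r| ≤ |t - r| := by
  obtain ⟨ht0, ht1⟩ := ht
  rcases hr with hr | hr
  · rw [abs_of_neg hr, abs_of_pos (by linarith)]; nlinarith
  · rw [abs_of_pos (by linarith), abs_of_nonpos (by linarith)]; nlinarith

section ZeroFreeSegments

variable {E F : Type*} [AddCommGroup E] [Module ℝ E] [TopologicalSpace E] [ContinuousSMul ℝ E]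
  [Zero F] {f : E → F}

def zeroFreeSegmentSet (f : E → F) : Set E := {a | ∀ t ∈ Ico (0 : ℝ) 1, f (t • a) ≠ 0}

theorem smul_mem_connectedComponentIn {a : E} (ha : a ∈ zeroFreeSegmentSet f) {s : ℝ}
    (hs : s ∈ Ico (0 : ℝ) 1) : s • a ∈ connectedComponentIn {x | f x ≠ 0} 0 := by
  have hseg : IsPreconnected ((· • a) '' Icc 0 s) :=
    isPreconnected_Icc.image _ (continuous_id.smul continuous_const).continuousOn
  refine hseg.subset_connectedComponentIn ⟨0, ⟨le_rfl, hs.1⟩, zero_smul ℝ a⟩ ?_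
    ⟨s, ⟨hs.1, le_rfl⟩, rfl⟩
  rintro _ ⟨t, ht, rfl⟩
  exact ha t ⟨ht.1, ht.2.trans_lt hs.2⟩

theorem zeroFreeSegmentSet_subset_closure :
    zeroFreeSegmentSet f ⊆ closure (connectedComponentIn {x | f x ≠ 0} 0) := by
  intro a ha
  have hlim : Filter.Tendsto (· • a) (𝓝[<] (1 : ℝ)) (𝓝 a) := by
    have hcont : Continuous fun s : ℝ => s • a := continuous_id.smul continuous_const
    exact (hcont.tendsto' 1 a (one_smul ℝ a)).mono_left nhdsWithin_le_nhds
  refine mem_closure_of_tendsto hlim ?_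
  filter_upwards [Ioo_mem_nhdsLT (zero_lt_one' ℝ)] with s hs
  exact smul_mem_connectedComponentIn ha ⟨hs.1.le, hs.2⟩

variable [TopologicalSpace F] [T1Space F]

theorem isOpen_setOf_forall_Icc_smul_ne_zero (hf : Continuous f) :
    IsOpen {a : E | ∀ t ∈ Icc (0 : ℝ) 1, f (t • a) ≠ 0} := by
  have hopen : IsOpen {z : E × ℝ | f (z.2 • z.1) ≠ 0} :=
    isOpen_compl_singleton.preimage (hf.comp (continuous_snd.smul continuous_fst))
  refine isOpen_iff_mem_nhds.2 fun a ha => ?_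
  exact isCompact_Icc.eventually_forall_of_forall_eventually fun t ht =>
    hopen.mem_nhds (ha t ht)

theorem connectedComponentIn_subset_zeroFreeSegmentSet (hf : Continuous f)
    (hR : IsClosed (zeroFreeSegmentSet f)) :
    connectedComponentIn {x | f x ≠ 0} 0 ⊆ zeroFreeSegmentSet f := by
  set U := {a : E | ∀ t ∈ Icc (0 : ℝ) 1, f (t • a) ≠ 0}
  have hUR : U ⊆ zeroFreeSegmentSet f := fun a ha t ht => ha t ⟨ht.1, ht.2.le⟩
  intro b hb
  have h0 : f 0 ≠ 0 := connectedComponentIn_nonempty_iff.1 ⟨b, hb⟩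
  refine hUR (isPreconnected_connectedComponentIn.subset_left_of_subset_union
    (isOpen_setOf_forall_Icc_smul_ne_zero hf) hR.isOpen_compl
    (disjoint_compl_right_iff_subset.2 hUR) ?_
    ⟨0, mem_connectedComponentIn h0, fun t _ => by rwa [smul_zero]⟩ hb)
  intro a ha
  by_cases haR : a ∈ zeroFreeSegmentSet f
  · refine Or.inl fun t ht => ?_
    rcases ht.2.lt_or_eq with ht1 | rfl
    · exact haR t ⟨ht.1, ht1⟩
    · simpa using connectedComponentIn_subset _ _ ha
  · exact Or.inr haR

theorem closure_connectedComponentIn_eq_zeroFreeSegmentSet (hf : Continuous f)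
    (hR : IsClosed (zeroFreeSegmentSet f)) :
    closure (connectedComponentIn {x | f x ≠ 0} 0) = zeroFreeSegmentSet f :=
  (closure_minimal (connectedComponentIn_subset_zeroFreeSegmentSet hf hR) hR).antisymm
    zeroFreeSegmentSet_subset_closure

end ZeroFreeSegments

namespace MvPolynomial

variable {σ : Type*} (p : MvPolynomial σ ℝ)

def IsRealZero : Prop :=
  ∀ a : σ → ℝ, ∀ z : ℂ,
    eval (fun i => z * (a i : ℂ)) (map (algebraMap ℝ ℂ) p) = 0 → z.im = 0

/-- `t ↦ p (t • a)`, taken over `ℂ` so that it splits. -/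
noncomputable def linePoly (a : σ → ℝ) : ℂ[X] :=
  aeval (fun i => Polynomial.C (a i : ℂ) * Polynomial.X) p

theorem eval_linePoly (a : σ → ℝ) (z : ℂ) :
    (p.linePoly a).eval z = eval (fun i => z * (a i : ℂ)) (map (algebraMap ℝ ℂ) p) := by
  induction p using MvPolynomial.induction_on with
  | C r => simp [linePoly]
  | add q r hq hr => simp_all [linePoly]
  | mul_X q i hq =>
    simp only [linePoly, map_mul, aeval_X, Polynomial.eval_mul, eval_X, map_X] at *
    simp only [hq, Polynomial.eval_C, Polynomial.eval_X]
    ring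

theorem eval_linePoly_ofReal (a : σ → ℝ) (t : ℝ) :
    (p.linePoly a).eval (t : ℂ) = (eval (t • a) p : ℂ) := by
  rw [eval_linePoly]
  induction p using MvPolynomial.induction_on with
  | C r => simp
  | add q r hq hr => simp [hq, hr]
  | mul_X q i hq => simp [hq]

theorem natDegree_linePoly_le (a : σ → ℝ) : (p.linePoly a).natDegree ≤ p.totalDegree :=
  p.natDegree_aeval_le_totalDegree fun _ => natDegree_C_mul_le _ _ |>.trans natDegree_X_le

variable {p}

namespace IsRealZero

theorem eval_zero_ne_zero (hp : p.IsRealZero) : eval 0 p ≠ 0 := by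
  intro h
  have hI : Complex.I.im = 0 := hp 0 Complex.I (by simpa using h)
  simp at hI

theorem im_eq_zero_of_mem_roots_linePoly (hp : p.IsRealZero) {a : σ → ℝ} {r : ℂ}
    (hr : r ∈ (p.linePoly a).roots) : r.im = 0 :=
  hp a r (p.eval_linePoly a r ▸ isRoot_of_mem_roots hr)

theorem pow_totalDegree_mul_abs_eval_zero_le (hp : p.IsRealZero) {a : σ → ℝ}
    (ha : a ∈ zeroFreeSegmentSet (eval · p)) {t : ℝ} (ht : t ∈ Ico (0 : ℝ) 1) :
    (1 - t) ^ p.totalDegree * |eval 0 p| ≤ |eval (t • a) p| := by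
  have hroots : ∀ r ∈ (p.linePoly a).roots, (1 - t) * ‖(0 : ℂ) - r‖ ≤ ‖(t : ℂ) - r‖ := by
    intro r hr
    have hreal : r = (r.re : ℂ) :=
      Complex.ext rfl (by simp [hp.im_eq_zero_of_mem_roots_linePoly hr])
    have hre : r.re < 0 ∨ 1 ≤ r.re := by
      by_contra! h
      refine ha r.re ⟨h.1, h.2⟩ ?_
      have := isRoot_of_mem_roots hr
      rw [IsRoot, hreal, eval_linePoly_ofReal] at this
      exact_mod_cast this
    rw [hreal, zero_sub, norm_neg, ← Complex.ofReal_sub, Complex.norm_real, Complex.norm_real]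
    exact one_sub_mul_abs_le_abs_sub hre (Ico_subset_Icc_self ht)
  have hc : 0 ≤ 1 - t := by linarith [ht.2]
  have hbound := pow_natDegree_mul_norm_eval_le hc hroots
  rw [← Complex.ofReal_zero, eval_linePoly_ofReal, eval_linePoly_ofReal, zero_smul,
    Complex.norm_real, Complex.norm_real, Real.norm_eq_abs, Real.norm_eq_abs] at hbound
  calc (1 - t) ^ p.totalDegree * |eval 0 p|
      ≤ (1 - t) ^ (p.linePoly a).natDegree * |eval 0 p| :=
        mul_le_mul_of_nonneg_right
          (pow_le_pow_of_le_one hc (by linarith [ht.1]) (natDegree_linePoly_le p a)) (abs_nonneg _)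
    _ ≤ |eval (t • a) p| := hbound

theorem isClosed_zeroFreeSegmentSet (hp : p.IsRealZero) :
    IsClosed (zeroFreeSegmentSet (eval · p)) := by
  have hR : zeroFreeSegmentSet (eval · p) = ⋂ t ∈ Ico (0 : ℝ) 1,
      {a | (1 - t) ^ p.totalDegree * |eval 0 p| ≤ |eval (t • a) p|} := by
    ext a
    simp only [mem_iInter, mem_ofPred_eq]
    refine ⟨fun ha t ht => hp.pow_totalDegree_mul_abs_eval_zero_le ha ht, fun ha t ht => ?_⟩
    have hc : 0 < (1 - t) ^ p.totalDegree * |eval 0 p| :=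
      mul_pos (pow_pos (by linarith [ht.2]) _) (abs_pos.2 hp.eval_zero_ne_zero)
    exact abs_pos.1 (hc.trans_le (ha t ht))
  rw [hR]
  exact isClosed_biInter fun t _ => isClosed_le continuous_const
    ((continuous_eval p).comp (continuous_const_smul t)).abs

end IsRealZero

end MvPolynomial

/-- Let `p ∈ ℝ[x_1,...,x_n]` be a real zero polynomial (for every `a ∈ ℝ^n` and `λ ∈ ℂ`,
`p(λa) = 0` implies `λ ∈ ℝ`). Then the Euclidean closure of the connected component of the
origin in `{a ∈ ℝ^n : p(a) ≠ 0}` equals `{a ∈ ℝ^n : p(λa) ≠ 0 for all λ ∈ [0,1)}`. -/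
theorem stmt9 (n : ℕ) (p : MvPolynomial (Fin n) ℝ)
    (hRZ : ∀ a : Fin n → ℝ, ∀ z : ℂ,
      MvPolynomial.eval (fun i => z * (a i : ℂ)) (MvPolynomial.map (algebraMap ℝ ℂ) p) = 0 →
      z.im = 0) :
    closure (connectedComponentIn {a : Fin n → ℝ | MvPolynomial.eval a p ≠ 0} 0) =
      {a : Fin n → ℝ | ∀ lam : ℝ, lam ∈ Set.Ico (0 : ℝ) 1 →
        MvPolynomial.eval (lam • a) p ≠ 0} :=
  closure_connectedComponentIn_eq_zeroFreeSegmentSet (MvPolynomial.continuous_eval p)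
    (MvPolynomial.IsRealZero.isClosed_zeroFreeSegmentSet hRZ)
end

section
/- A nonzero homogeneous polynomial p ∈ ℝ[x_1,...,x_n] is real stable if and only if it is hyperbolic with respect to every direction e ∈ ℝ^n with all coordinates strictly positive, i.e. if and only if for every e ∈ ℝ^n_{>0} one has p(e) ≠ 0 and for every a ∈ ℝ^n the univariate polynomial t ↦ p(a − t·e) has only real roots. -/
open MvPolynomial Complex

lemma aux_eval_smul {n d : ℕ} {p : MvPolynomial (Fin n) ℂ} (h : p.IsHomogeneous d)
    (c : ℂ) (x : Fin n → ℂ) :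
    MvPolynomial.eval (fun i => c * x i) p = c ^ d * MvPolynomial.eval x p := by
  rw [MvPolynomial.eval_eq', MvPolynomial.eval_eq', Finset.mul_sum]
  refine Finset.sum_congr rfl fun m hm => ?_
  have hd := h (MvPolynomial.mem_support_iff.mp hm)
  have hsum : ∑ i, m i = d := by
    rw [← hd, Finsupp.weight_apply]
    simp [Finsupp.sum_fintype]
  calc MvPolynomial.coeff m p * ∏ i, (c * x i) ^ m i
      = MvPolynomial.coeff m p * ((∏ i, c ^ m i) * ∏ i, x i ^ m i) := by
        rw [← Finset.prod_mul_distrib]; simp [mul_pow]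
    _ = c ^ d * (MvPolynomial.coeff m p * ∏ i, x i ^ m i) := by
        rw [Finset.prod_pow_eq_pow_sum, hsum]; ring

lemma aux_eval_map {n : ℕ} (e : Fin n → ℝ) (p : MvPolynomial (Fin n) ℝ) :
    MvPolynomial.eval (fun i => (e i : ℂ)) (MvPolynomial.map (algebraMap ℝ ℂ) p)
      = ((MvPolynomial.eval e p : ℝ) : ℂ) := by
  rw [MvPolynomial.eval_map]
  have := MvPolynomial.eval₂_comp_left (algebraMap ℝ ℂ) (RingHom.id ℝ) e p
  simp only [MvPolynomial.eval₂_id, RingHom.comp_id] at this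
  exact this.symm

/-- A nonzero homogeneous polynomial `p ∈ ℝ[x_1,...,x_n]` is real stable (nonvanishing whenever
all coordinates have strictly positive imaginary part) if and only if it is hyperbolic with
respect to every direction `e ∈ ℝ^n` with all coordinates strictly positive, i.e. for every
such `e`, `p(e) ≠ 0` and for every `a ∈ ℝ^n` the univariate polynomial `t ↦ p(a − t·e)` has
only real roots. -/
theorem stmt10 (n d : ℕ) (p : MvPolynomial (Fin n) ℝ) (hp : p ≠ 0)
    (hhom : p.IsHomogeneous d) :
    (∀ z : Fin n → ℂ, (∀ i, 0 < (z i).im) →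
        MvPolynomial.eval z (MvPolynomial.map (algebraMap ℝ ℂ) p) ≠ 0) ↔
      (∀ e : Fin n → ℝ, (∀ i, 0 < e i) →
        MvPolynomial.eval e p ≠ 0 ∧
        ∀ a : Fin n → ℝ, ∀ z : ℂ,
          MvPolynomial.eval (fun i => (a i : ℂ) - z * (e i : ℂ))
            (MvPolynomial.map (algebraMap ℝ ℂ) p) = 0 → z.im = 0) := by
  have hmc : (MvPolynomial.map (algebraMap ℝ ℂ) p).IsHomogeneous d :=
    hhom.map (algebraMap ℝ ℂ)
  constructor
  · intro h e he
    constructor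
    · -- p(e) ≠ 0
      intro h0
      have him : ∀ i, 0 < ((Complex.I * (e i : ℂ)).im) := by
        intro i; simp [he i]
      apply h (fun i => Complex.I * (e i : ℂ)) him
      rw [aux_eval_smul hmc Complex.I (fun i => (e i : ℂ)), aux_eval_map, h0]
      simp
    · intro a z heval
      by_contra hz
      rcases lt_or_gt_of_ne hz with hlt | hgt
      · -- z.im > 0 case: Im z ≠ 0 and... split by sign
        exact h (fun i => (a i : ℂ) - z * (e i : ℂ))
          (fun i => by simp; nlinarith [he i]) heval
      · apply h (fun i => z * (e i : ℂ) - (a i : ℂ))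
          (fun i => by simp; nlinarith [he i])
        have : (fun i => z * (e i : ℂ) - (a i : ℂ))
            = fun i => (-1 : ℂ) * ((a i : ℂ) - z * (e i : ℂ)) := by
          funext i; ring
        rw [this, aux_eval_smul hmc (-1) _, heval]
        simp
  · intro h z hz
    intro heval
    have h2 := (h (fun i => (z i).im) (fun i => hz i)).2 (fun i => (z i).re) (-Complex.I)
    have harg : (fun i => (((z i).re : ℝ) : ℂ) - (-Complex.I) * (((z i).im : ℝ) : ℂ))
        = z := by
      funext i
      simp [Complex.ext_iff]
    rw [harg] at h2
    have := h2 heval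
    simp at this
end

section
/- Let p ∈ ℝ[x_0,x_1,...,x_n] be a homogeneous real stable polynomial such that p(u) ≠ 0 for the first unit vector u = (1,0,...,0) ∈ ℝ^{n+1}. Then the dehomogenization q(x_1,...,x_n) = p(1,x_1,...,x_n) is a real zero polynomial. -/
/-!
Write `e = (1, 0, …, 0)` and `x = (0, a)`, so that `q(λa) = p(e + λx)`. For `w` in the open
positive orthant, stability and real coefficients give `p(x + tw) ≠ 0` for non-real `t`, and
homogeneity turns this into `p(w + sx) ≠ 0` for non-real `s`: the univariate polynomial
`g(s) = p(w + sx)` is real-rooted. Factoring `g` over its real roots `r` and using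
`|s - r| ≥ |r| |Im s| / |s|` gives `|g(s)| ≥ |g(0)| (|Im s| / |s|) ^ deg p`, a bound that does not
depend on `w`. Taking `w = e + μ(1, …, 1)` and letting `μ → 0⁺` yields
`|p(e + sx)| ≥ |p(e)| (|Im s| / |s|) ^ deg p > 0` for every non-real `s`.
-/

open Polynomial

namespace MvPolynomial

variable {σ R A : Type*} [CommSemiring R] [CommSemiring A] [Algebra R A]

theorem IsHomogeneous.aeval_smul {p : MvPolynomial σ R} {n : ℕ} (hp : p.IsHomogeneous n)
    (c : A) (x : σ → A) : MvPolynomial.aeval (c • x) p = c ^ n * MvPolynomial.aeval x p := by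
  conv_lhs => rw [p.as_sum]
  conv_rhs => rw [p.as_sum]
  rw [map_sum, map_sum, Finset.mul_sum]
  refine Finset.sum_congr rfl fun m hm => ?_
  simp only [aeval_monomial, Pi.smul_apply, smul_eq_mul, mul_pow, Finsupp.prod_mul]
  rw [Finsupp.prod, Finsupp.prod, Finset.prod_pow_eq_pow_sum,
    ← hp.degree_eq_sum_deg_support hm]
  ring

theorem natDegree_aeval_le_totalDegree_s12 (p : MvPolynomial σ R) {g : σ → A[X]}
    (hg : ∀ i, (g i).natDegree ≤ 1) : (aeval g p).natDegree ≤ p.totalDegree := by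
  conv_lhs => rw [p.as_sum]
  rw [map_sum]
  refine natDegree_sum_le_of_forall_le _ _ fun m hm => ?_
  rw [aeval_monomial, ← smul_eq_mul, algebraMap_smul]
  refine (natDegree_smul_le _ _).trans ?_
  calc (m.prod fun i k => g i ^ k).natDegree ≤ ∑ i ∈ m.support, m i * (g i).natDegree :=
        (natDegree_prod_le _ _).trans (Finset.sum_le_sum fun i _ => natDegree_pow_le)
    _ ≤ ∑ i ∈ m.support, m i :=
        Finset.sum_le_sum fun i _ => by simpa using Nat.mul_le_mul_left (m i) (hg i)
    _ ≤ p.totalDegree := le_totalDegree hm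

theorem polynomial_eval_aeval (g : σ → A[X]) (p : MvPolynomial σ R) (t : A) :
    (aeval g p).eval t = aeval (fun i => (g i).eval t) p := by
  simpa using comp_aeval_apply g ((Polynomial.aeval t).restrictScalars R) p

end MvPolynomial

theorem Complex.abs_im_mul_norm_le_norm_mul_norm_sub (s : ℂ) {r : ℂ} (hr : r.im = 0) :
    |s.im| * ‖r‖ ≤ ‖s‖ * ‖s - r‖ := by
  have him : (s * (starRingEnd ℂ) (s - r)).im = -(s.im * r.re) := by
    simp [hr]
    ring
  calc |s.im| * ‖r‖ = |(s * (starRingEnd ℂ) (s - r)).im| := by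
        rw [him, abs_neg, abs_mul, ← Complex.re_add_im r, hr]
        simp
    _ ≤ ‖s * (starRingEnd ℂ) (s - r)‖ := Complex.abs_im_le_norm _
    _ = ‖s‖ * ‖s - r‖ := by rw [norm_mul, Complex.norm_conj]

theorem Polynomial.norm_eval_zero_mul_pow_le_norm_eval {f : ℂ[X]} (hf : ∀ r ∈ f.roots, r.im = 0)
    {D : ℕ} (hD : f.natDegree ≤ D) (s : ℂ) :
    ‖f.eval 0‖ * (|s.im| / ‖s‖) ^ D ≤ ‖f.eval s‖ := by
  have hnorm : ∀ t, ‖f.eval t‖ = ‖f.leadingCoeff‖ * (f.roots.map fun r => ‖t - r‖).prod := by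
    intro t
    conv_lhs => rw [(IsAlgClosed.splits f).eq_prod_roots]
    simp only [eval_mul, eval_C, eval_multiset_prod, Multiset.map_map, Function.comp_def, eval_sub,
      eval_X, norm_mul]
    rw [← normHom_apply (Multiset.prod _), map_multiset_prod, Multiset.map_map]
    rfl
  set k := |s.im| / ‖s‖
  have hk0 : 0 ≤ k := by positivity
  have hk1 : k ≤ 1 := div_le_one_of_le₀ (Complex.abs_im_le_norm s) (norm_nonneg s)
  calc ‖f.eval 0‖ * k ^ D ≤ ‖f.eval 0‖ * k ^ Multiset.card f.roots := by
        gcongr ?_ * ?_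
        exact pow_le_pow_of_le_one hk0 hk1 ((card_roots' f).trans hD)
    _ = ‖f.leadingCoeff‖ * (f.roots.map fun r => k * ‖r‖).prod := by
        rw [hnorm, Multiset.prod_map_mul, Multiset.map_const', Multiset.prod_replicate]
        simp only [zero_sub, norm_neg]
        ring
    _ ≤ ‖f.leadingCoeff‖ * (f.roots.map fun r => ‖s - r‖).prod := by
        gcongr
        refine Multiset.prod_map_le_prod_map₀ _ _ (fun r _ => by positivity) fun r hr => ?_
        rcases (norm_nonneg s).eq_or_lt with hs | hs
        · simp [k, ← hs]
        · rw [div_mul_eq_mul_div, div_le_iff₀ hs, mul_comm ‖s - r‖]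
          exact Complex.abs_im_mul_norm_le_norm_mul_norm_sub s (hf r hr)
    _ = ‖f.eval s‖ := (hnorm s).symm

namespace MvPolynomial

variable {σ : Type*}

def IsRealStable (p : MvPolynomial σ ℝ) : Prop :=
  p = 0 ∨ ∀ z : σ → ℂ, (∀ i, 0 < (z i).im) → aeval z p ≠ 0

namespace IsRealStable

variable {p : MvPolynomial σ ℝ}

theorem aeval_add_mul_ne_zero (hp : p.IsRealStable) (hp0 : p ≠ 0) (x : σ → ℝ) {w : σ → ℝ}
    (hw : ∀ i, 0 < w i) {t : ℂ} (ht : t.im ≠ 0) :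
    aeval (fun i => (x i : ℂ) + t * w i) p ≠ 0 := by
  have hupper : ∀ t : ℂ, 0 < t.im → aeval (fun i => (x i : ℂ) + t * w i) p ≠ 0 :=
    fun t ht => hp.resolve_left hp0 _ fun i => by simpa using mul_pos ht (hw i)
  rcases ht.lt_or_gt with hneg | hpos
  · -- real coefficients: the zeros are closed under conjugation
    intro h0
    have hconj := comp_aeval_apply (fun i => (x i : ℂ) + t * w i) Complex.conjAe.toAlgHom p
    rw [h0, map_zero] at hconj
    refine hupper ((starRingEnd ℂ) t) (by simpa using hneg) (Eq.trans ?_ hconj.symm)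
    congr 1
    ext i
    simp [Complex.conjAe_coe]
  · exact hupper t hpos

theorem aeval_add_mul_ne_zero_of_isHomogeneous (hp : p.IsRealStable) (hp0 : p ≠ 0) {n : ℕ}
    (hh : p.IsHomogeneous n) {w : σ → ℝ} (hw : ∀ i, 0 < w i) (x : σ → ℝ) {s : ℂ}
    (hs : s.im ≠ 0) : aeval (fun i => (w i : ℂ) + s * x i) p ≠ 0 := by
  have hs0 : s ≠ 0 := fun h => hs (by simp [h])
  have hinv : (s⁻¹).im ≠ 0 := by simp [Complex.inv_im, hs, hs0]
  have hscale : (fun i => (w i : ℂ) + s * x i) = s • fun i => (x i : ℂ) + s⁻¹ * w i := by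
    ext i
    simp only [Pi.smul_apply, smul_eq_mul]
    field_simp
    ring
  rw [hscale, hh.aeval_smul]
  exact mul_ne_zero (pow_ne_zero _ hs0) (hp.aeval_add_mul_ne_zero hp0 x hw hinv)

theorem norm_aeval_mul_pow_le_norm_aeval_add_mul (hp : p.IsRealStable) (hp0 : p ≠ 0) {n : ℕ}
    (hh : p.IsHomogeneous n) {w : σ → ℝ} (hw : ∀ i, 0 < w i) (x : σ → ℝ) (s : ℂ) :
    ‖aeval (fun i => (w i : ℂ)) p‖ * (|s.im| / ‖s‖) ^ p.totalDegree ≤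
      ‖aeval (fun i => (w i : ℂ) + s * x i) p‖ := by
  set g : ℂ[X] :=
    aeval (fun i => Polynomial.C (x i : ℂ) * Polynomial.X + Polynomial.C (w i : ℂ)) p
  have hg : ∀ t, g.eval t = aeval (fun i => (w i : ℂ) + t * x i) p := by
    intro t
    rw [polynomial_eval_aeval]
    congr 2
    ext i
    simp only [Polynomial.eval_add, Polynomial.eval_C, Polynomial.eval_mul, Polynomial.eval_X]
    ring
  have hroots : ∀ r ∈ g.roots, r.im = 0 := fun r hr => by
    by_contra him
    refine hp.aeval_add_mul_ne_zero_of_isHomogeneous hp0 hh hw x him ?_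
    rw [← hg]
    exact (mem_roots'.1 hr).2
  have hdeg : g.natDegree ≤ p.totalDegree :=
    natDegree_aeval_le_totalDegree_s12 p fun i => natDegree_linear_le
  simpa only [hg, zero_mul, add_zero] using g.norm_eval_zero_mul_pow_le_norm_eval hroots hdeg s

theorem aeval_add_mul_ne_zero_of_nonneg (hp : p.IsRealStable) {n : ℕ} (hh : p.IsHomogeneous n)
    {e : σ → ℝ} (he : ∀ i, 0 ≤ e i) (hpe : eval e p ≠ 0) (x : σ → ℝ) {s : ℂ}
    (hs : s.im ≠ 0) : aeval (fun i => (e i : ℂ) + s * x i) p ≠ 0 := by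
  have hp0 : p ≠ 0 := by rintro rfl; simp at hpe
  set k := |s.im| / ‖s‖
  have hk : 0 < k := div_pos (abs_pos.2 hs) (norm_pos_iff.2 fun h => hs (by simp [h]))
  set L : ℝ → ℝ := fun μ => ‖aeval (fun i => ((e i + μ : ℝ) : ℂ)) p‖ * k ^ p.totalDegree
  set R : ℝ → ℝ := fun μ => ‖aeval (fun i => ((e i + μ : ℝ) : ℂ) + s * x i) p‖
  have hbound : Set.Ioi 0 ⊆ {μ | L μ ≤ R μ} := fun μ hμ =>
    hp.norm_aeval_mul_pow_le_norm_aeval_add_mul hp0 hh (fun i => by linarith [he i, hμ.out]) x s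
  have hcont : Continuous fun z : σ → ℂ => aeval z p := by
    simpa [eval_map, aeval_def] using continuous_eval (p.map (algebraMap ℝ ℂ))
  have hL : Continuous L := by fun_prop
  have hR : Continuous R := by fun_prop
  have hzero : L 0 ≤ R 0 := (isClosed_le hL hR).closure_subset_iff.2 hbound (by simp)
  have hL0 : 0 < L 0 := by
    have hreal : aeval (fun i => (e i : ℂ)) p = (eval e p : ℂ) := by
      simpa [Function.comp_def] using aeval_algebraMap_apply ℂ e p
    simp only [L, add_zero, hreal, Complex.norm_real]
    positivity
  simpa [R] using hL0.trans_le hzero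

end IsRealStable

end MvPolynomial

/-- Let `p ∈ ℝ[x_0,x_1,...,x_n]` be a homogeneous real stable polynomial (it does not vanish
whenever all coordinates have strictly positive imaginary part) such that `p(u) ≠ 0` for the
first unit vector `u = (1,0,...,0)`. Then the dehomogenization `q(x_1,...,x_n) = p(1,x_1,...,x_n)`
is a real zero polynomial (for every `a ∈ ℝ^n` and `λ ∈ ℂ`, `q(λa) = 0` implies `λ ∈ ℝ`). -/
theorem stmt12 (n d : ℕ) (p : MvPolynomial (Fin (n + 1)) ℝ)
    (hhom : p.IsHomogeneous d)
    (hstable : p = 0 ∨ ∀ z : Fin (n + 1) → ℂ, (∀ i, 0 < (z i).im) →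
      MvPolynomial.eval z (MvPolynomial.map (algebraMap ℝ ℂ) p) ≠ 0)
    (hu : MvPolynomial.eval (Fin.cons 1 (fun _ => 0) : Fin (n + 1) → ℝ) p ≠ 0) :
    ∀ a : Fin n → ℝ, ∀ z : ℂ,
      MvPolynomial.eval (Fin.cons (1 : ℂ) (fun i => z * (a i : ℂ)))
        (MvPolynomial.map (algebraMap ℝ ℂ) p) = 0 → z.im = 0 := by
  intro a z hz
  by_contra him
  have hp : p.IsRealStable := by
    simpa only [MvPolynomial.IsRealStable, MvPolynomial.eval_map, MvPolynomial.aeval_def]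
      using hstable
  refine hp.aeval_add_mul_ne_zero_of_nonneg hhom (e := Fin.cons 1 fun _ => 0)
    (Fin.cases zero_le_one fun _ => le_rfl) hu (Fin.cons 0 a) him ?_
  rw [MvPolynomial.eval_map, ← MvPolynomial.aeval_def] at hz
  convert hz using 2
  ext i
  cases i using Fin.cases <;> simp
end

section
/- For every n ≥ 1, the multivariate Eulerian polynomial A_n(x,y) = Σ_{σ ∈ S_{n+1}} ∏_{i ∈ DT(σ)} x_i · ∏_{j ∈ AT(σ)} y_j ∈ ℝ[x_2,...,x_{n+1}, y_2,...,y_{n+1}] is real stable. -/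
/-- Descent top set of a permutation `σ` of `Fin (n+1)`:
`DT(σ) = {σ(i) : i ∈ {1,...,n}, σ(i) > σ(i+1)}`. -/
def descentTops (n : ℕ) (σ : Equiv.Perm (Fin (n + 1))) : Finset (Fin (n + 1)) :=
  (Finset.univ.filter fun i : Fin n => σ i.succ < σ i.castSucc).image fun i => σ i.castSucc

/-- Ascent top set of a permutation `σ` of `Fin (n+1)`:
`AT(σ) = {σ(i+1) : i ∈ {1,...,n}, σ(i) < σ(i+1)}`. -/
def ascentTops (n : ℕ) (σ : Equiv.Perm (Fin (n + 1))) : Finset (Fin (n + 1)) :=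
  (Finset.univ.filter fun i : Fin n => σ i.castSucc < σ i.succ).image fun i => σ i.succ

/-- The multivariate Eulerian polynomial
`A_n(x,y) = Σ_{σ ∈ S_{n+1}} ∏_{i ∈ DT(σ)} x_i · ∏_{j ∈ AT(σ)} y_j`, with the `x` variables
indexed by `Sum.inl` and the `y` variables indexed by `Sum.inr`. -/
noncomputable def mvEulerian (n : ℕ) : MvPolynomial (Fin (n + 1) ⊕ Fin (n + 1)) ℝ :=
  ∑ σ : Equiv.Perm (Fin (n + 1)),
    (∏ i ∈ descentTops n σ, MvPolynomial.X (Sum.inl i)) *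
      ∏ j ∈ ascentTops n σ, MvPolynomial.X (Sum.inr j)

/-- A polynomial over `ℂ` is stable if it is zero or does not vanish whenever every
coordinate has strictly positive imaginary part. -/
def IsStable {σ : Type*} (p : MvPolynomial σ ℂ) : Prop :=
  p = 0 ∨ ∀ z : σ → ℂ, (∀ i, 0 < (z i).im) → MvPolynomial.eval z p ≠ 0

/-!
Write `A_n = ∑_σ ∏_i v_σ(i)`, where the `i`-th adjacency of `σ` contributes the variable of its
top: `x_{σ(i)}` at a descent, `y_{σ(i+1)}` at an ascent. Inserting the new maximum `n + 2` into
`τ ∈ S_{n+1}` in front, at the end, or inside the `k`-th adjacency multiplies the monomial of `τ`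
by `x`, by `y`, or by `x y / v_τ(k)` (`x`, `y` the two new variables), so
`A_{n+1} = (x + y) A_n + x y ∑_u ∂_u A_n`.

If `p` has no zero with all coordinates in the upper half-plane and `z` is such a point, the roots
of `t ↦ p(z + t)` lie in the lower half-plane, so `Im (∑_u ∂_u p(z) / p(z)) ≤ 0`. A zero of
`(x + y) p + x y ∑_u ∂_u p` would make this ratio `-(1/x + 1/y)`, whose imaginary part is positive.
-/

open MvPolynomial Finset

theorem Polynomial.im_eval_derivative_div_eval_nonpos {g : Polynomial ℂ} {w : ℂ}
    (hw : g.eval w ≠ 0) (hroots : ∀ r ∈ g.roots, r.im ≤ w.im) :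
    (g.derivative.eval w / g.eval w).im ≤ 0 := by
  rw [(IsAlgClosed.splits g).eval_derivative_div_eval_of_ne_zero hw]
  refine Multiset.sum_induction (fun c : ℂ => c.im ≤ 0) _
    (fun a b ha hb => by simpa using add_nonpos ha hb) (by simp) fun c hc => ?_
  obtain ⟨r, hr, rfl⟩ := Multiset.mem_map.mp hc
  simp only [one_div, Complex.inv_im, Complex.sub_im, neg_sub]
  exact div_nonpos_of_nonpos_of_nonneg (sub_nonpos.mpr (hroots r hr)) (Complex.normSq_nonneg _)

theorem MvPolynomial.derivative_aeval {R σ : Type*} [CommSemiring R] [Fintype σ]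
    (f : σ → Polynomial R) (p : MvPolynomial σ R) :
    Polynomial.derivative (aeval f p) =
      ∑ i, aeval f (pderiv i p) * Polynomial.derivative (f i) := by
  classical
  induction p using MvPolynomial.induction_on with
  | C a => simp
  | add p q hp hq => simp [hp, hq, sum_add_distrib, add_mul]
  | mul_X p i hp =>
    simp only [map_mul, aeval_X, Polynomial.derivative_mul, hp, Derivation.leibniz, pderiv_X,
      smul_eq_mul, map_add, add_mul, sum_add_distrib, Pi.single_apply, mul_ite, mul_one, mul_zero,
      apply_ite (aeval f), map_zero, ite_mul, zero_mul, sum_ite_eq, mem_univ, if_true, sum_mul]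
    rw [add_comm]
    congr 1
    exact sum_congr rfl fun _ _ => by ring

theorem MvPolynomial.eval_aeval_C_add_X {R σ : Type*} [CommSemiring R] (z : σ → R)
    (p : MvPolynomial σ R) (t : R) :
    (aeval (fun i => Polynomial.C (z i) + Polynomial.X) p).eval t = eval (fun i => z i + t) p := by
  rw [← Polynomial.coe_aeval_eq_eval, ← AlgHom.comp_apply, comp_aeval]
  simp

theorem MvPolynomial.im_sum_eval_pderiv_div_eval_nonpos {σ : Type*} [Fintype σ]
    {p : MvPolynomial σ ℂ} (hp : ∀ z : σ → ℂ, (∀ i, 0 < (z i).im) → eval z p ≠ 0)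
    {z : σ → ℂ} (hz : ∀ i, 0 < (z i).im) :
    ((∑ i, eval z (pderiv i p)) / eval z p).im ≤ 0 := by
  set g := aeval (fun i => Polynomial.C (z i) + Polynomial.X) p
  have hg : g.eval 0 = eval z p := by simp [g, eval_aeval_C_add_X]
  have hg' : g.derivative.eval 0 = ∑ i, eval z (pderiv i p) := by
    simp [g, derivative_aeval, Polynomial.eval_finsetSum, eval_aeval_C_add_X]
  rw [← hg, ← hg']
  refine Polynomial.im_eval_derivative_div_eval_nonpos (hg ▸ hp z hz) fun r hr => ?_
  have hzr : ¬ ∀ i, 0 < (z i + r).im := fun h =>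
    hp _ h (by rw [← eval_aeval_C_add_X]; exact Polynomial.isRoot_of_mem_roots hr)
  obtain ⟨i, hi⟩ := not_forall.mp hzr
  rw [not_lt, Complex.add_im] at hi
  rw [Complex.zero_im]
  linarith [hz i]

theorem MvPolynomial.add_mul_eval_add_mul_sum_eval_pderiv_ne_zero {σ : Type*} [Fintype σ]
    {p : MvPolynomial σ ℂ} (hp : ∀ z : σ → ℂ, (∀ i, 0 < (z i).im) → eval z p ≠ 0)
    {z : σ → ℂ} (hz : ∀ i, 0 < (z i).im) {x y : ℂ} (hx : 0 < x.im) (hy : 0 < y.im) :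
    (x + y) * eval z p + x * y * ∑ i, eval z (pderiv i p) ≠ 0 := by
  have hp0 := hp z hz
  have hx0 : x ≠ 0 := fun h => by simp [h] at hx
  have hy0 : y ≠ 0 := fun h => by simp [h] at hy
  intro h
  have hratio : (∑ i, eval z (pderiv i p)) / eval z p = -(x⁻¹ + y⁻¹) := by
    field_simp
    linear_combination h
  have hnonpos := im_sum_eval_pderiv_div_eval_nonpos hp hz
  rw [hratio, Complex.neg_im, Complex.add_im, Complex.inv_im, Complex.inv_im, neg_div,
    neg_div] at hnonpos
  linarith [div_pos hx (Complex.normSq_pos.mpr hx0), div_pos hy (Complex.normSq_pos.mpr hy0)]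

theorem Derivation.leibniz_prod {R A : Type*} [CommSemiring R] [CommSemiring A]
    [Algebra R A] {ι : Type*} [DecidableEq ι] (D : Derivation R A A) (s : Finset ι) (f : ι → A) :
    D (∏ i ∈ s, f i) = ∑ k ∈ s, (∏ i ∈ s.erase k, f i) * D (f k) := by
  induction s using Finset.induction_on with
  | empty => simp
  | insert a s ha ih =>
    rw [prod_insert ha, sum_insert ha, erase_insert ha, D.leibniz, ih, smul_eq_mul, smul_eq_mul,
      mul_sum, add_comm]
    congr 1
    refine sum_congr rfl fun k hk => ?_
    rw [erase_insert_of_ne (ne_of_mem_of_not_mem hk ha).symm,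
      prod_insert (fun h => ha (mem_of_mem_erase h)), mul_assoc]

theorem MvPolynomial.sum_pderiv_prod_X {R σ ι : Type*} [CommSemiring R] [Fintype σ] [DecidableEq ι]
    (s : Finset ι) (w : ι → σ) :
    ∑ u, pderiv u (∏ i ∈ s, (X (w i) : MvPolynomial σ R)) = ∑ k ∈ s, ∏ i ∈ s.erase k, X (w i) := by
  classical
  simp_rw [Derivation.leibniz_prod, pderiv_X]
  rw [sum_comm]
  refine sum_congr rfl fun k _ => ?_
  simp [Pi.single_apply]

def topVar (n : ℕ) (σ : Equiv.Perm (Fin (n + 1))) (i : Fin n) : Fin (n + 1) ⊕ Fin (n + 1) :=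
  if σ i.succ < σ i.castSucc then .inl (σ i.castSucc) else .inr (σ i.succ)

theorem mvEulerian_eq_sum_prod_X_topVar (n : ℕ) :
    mvEulerian n = ∑ σ : Equiv.Perm (Fin (n + 1)), ∏ i, X (topVar n σ i) := by
  refine sum_congr rfl fun σ _ => ?_
  have hasc : ∀ i : Fin n, σ i.castSucc < σ i.succ ↔ ¬ σ i.succ < σ i.castSucc := fun i =>
    ⟨lt_asymm, fun h => (not_lt.mp h).lt_of_ne (σ.injective.ne (Fin.castSucc_lt_succ (i := i)).ne)⟩
  rw [descentTops, ascentTops,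
    prod_image fun a _ b _ h => Fin.castSucc_injective _ (σ.injective h),
    prod_image fun a _ b _ h => Fin.succ_injective _ (σ.injective h), filter_congr fun i _ => hasc i,
    ← prod_filter_mul_prod_filter_not univ fun i : Fin n => σ i.succ < σ i.castSucc]
  congr 1 <;> refine prod_congr rfl fun i hi => ?_ <;> simp_all [topVar]

theorem sum_pderiv_mvEulerian (n : ℕ) :
    ∑ u, pderiv u (mvEulerian n) =
      ∑ σ : Equiv.Perm (Fin (n + 1)), ∑ k, ∏ i ∈ univ.erase k, X (topVar n σ i) := by
  simp only [mvEulerian_eq_sum_prod_X_topVar, map_sum]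
  rw [sum_comm]
  exact sum_congr rfl fun σ _ => sum_pderiv_prod_X _ _

def insertMax (n : ℕ) (p : Fin (n + 2)) (τ : Equiv.Perm (Fin (n + 1))) :
    Equiv.Perm (Fin (n + 2)) where
  toFun := Fin.insertNth p (Fin.last (n + 1)) fun j => (τ j).castSucc
  invFun := Fin.lastCases p fun w => p.succAbove (τ.symm w)
  left_inv i := by refine Fin.succAboveCases p ?_ (fun j => ?_) i <;> simp
  right_inv w := by refine Fin.lastCases ?_ (fun v => ?_) w <;> simp

@[simp] theorem insertMax_self (n : ℕ) (p : Fin (n + 2)) (τ : Equiv.Perm (Fin (n + 1))) :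
    insertMax n p τ p = Fin.last (n + 1) := by
  simp [insertMax]

@[simp] theorem insertMax_succAbove (n : ℕ) (p : Fin (n + 2)) (τ : Equiv.Perm (Fin (n + 1)))
    (j : Fin (n + 1)) : insertMax n p τ (p.succAbove j) = (τ j).castSucc := by
  simp [insertMax]

theorem insertMax_bijective (n : ℕ) :
    Function.Bijective
      fun pτ : Fin (n + 2) × Equiv.Perm (Fin (n + 1)) => insertMax n pτ.1 pτ.2 := by
  rw [Fintype.bijective_iff_injective_and_card]
  refine ⟨fun ⟨p, τ⟩ ⟨p', τ'⟩ h => ?_, by simp [Fintype.card_perm, Nat.factorial_succ]⟩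
  simp only at h
  obtain rfl : p = p' := by
    by_contra hne
    obtain ⟨j, rfl⟩ := Fin.exists_succAbove_eq hne
    have := congrArg (· (p'.succAbove j)) h
    simp only [insertMax_self, insertMax_succAbove] at this
    exact (Fin.castSucc_lt_last _).ne' this
  obtain rfl : τ = τ' := Equiv.ext fun j => by
    simpa using congrArg (· (p.succAbove j)) h
  rfl

section InsertMax

variable {n : ℕ} {p : Fin (n + 2)} {τ : Equiv.Perm (Fin (n + 1))} {i : Fin (n + 1)}

theorem topVar_insertMax_of_castSucc_eq (h : i.castSucc = p) :
    topVar (n + 1) (insertMax n p τ) i = .inl (Fin.last (n + 1)) := by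
  obtain ⟨j, hj⟩ := Fin.exists_succAbove_eq (x := i.succ) (y := p) (h ▸ Fin.castSucc_lt_succ.ne')
  rw [topVar, h, ← hj, insertMax_self, insertMax_succAbove, if_pos (Fin.castSucc_lt_last _)]

theorem topVar_insertMax_of_succ_eq (h : i.succ = p) :
    topVar (n + 1) (insertMax n p τ) i = .inr (Fin.last (n + 1)) := by
  obtain ⟨j, hj⟩ := Fin.exists_succAbove_eq (x := i.castSucc) (y := p) (h ▸ Fin.castSucc_lt_succ.ne)
  rw [topVar, h, ← hj, insertMax_self, insertMax_succAbove,
    if_neg (not_lt.mpr (Fin.castSucc_lt_last _).le)]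

theorem topVar_insertMax_of_succAbove {k : Fin n} (h₁ : i.castSucc = p.succAbove k.castSucc)
    (h₂ : i.succ = p.succAbove k.succ) :
    topVar (n + 1) (insertMax n p τ) i = Sum.map Fin.castSucc Fin.castSucc (topVar n τ k) := by
  simp only [topVar, h₁, h₂, insertMax_succAbove, Fin.castSucc_lt_castSucc_iff]
  split_ifs <;> rfl

variable {R : Type*} [CommSemiring R]

theorem prod_X_topVar_insertMax_zero :
    ∏ i, (X (topVar (n + 1) (insertMax n 0 τ) i) : MvPolynomial _ R) =
      X (.inl (Fin.last (n + 1))) *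
        rename (Sum.map Fin.castSucc Fin.castSucc) (∏ k, X (topVar n τ k)) := by
  rw [Fin.prod_univ_succ, topVar_insertMax_of_castSucc_eq (i := 0) (p := 0) rfl, map_prod]
  congr 1
  refine prod_congr rfl fun k _ => ?_
  rw [rename_X, topVar_insertMax_of_succAbove
    (by rw [Fin.succAbove_zero_apply, Fin.succ_castSucc]) (Fin.succAbove_zero_apply _).symm]

theorem prod_X_topVar_insertMax_last :
    ∏ i, (X (topVar (n + 1) (insertMax n (Fin.last (n + 1)) τ) i) : MvPolynomial _ R) =
      X (.inr (Fin.last (n + 1))) *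
        rename (Sum.map Fin.castSucc Fin.castSucc) (∏ k, X (topVar n τ k)) := by
  rw [Fin.prod_univ_castSucc, topVar_insertMax_of_succ_eq (Fin.succ_last n), map_prod, mul_comm]
  congr 1
  refine prod_congr rfl fun k _ => ?_
  rw [rename_X, topVar_insertMax_of_succAbove (Fin.succAbove_last_apply _).symm
    (by rw [Fin.succAbove_last_apply, Fin.succ_castSucc])]

theorem prod_X_topVar_insertMax_castSucc_succ (t : Fin n) :
    ∏ i, (X (topVar (n + 1) (insertMax n t.castSucc.succ τ) i) : MvPolynomial _ R) =
      X (.inl (Fin.last (n + 1))) * X (.inr (Fin.last (n + 1))) *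
        rename (Sum.map Fin.castSucc Fin.castSucc) (∏ k ∈ univ.erase t, X (topVar n τ k)) := by
  rw [Fin.prod_univ_succAbove _ t.castSucc, ← mul_prod_erase univ _ (mem_univ t),
    Fin.succAbove_of_le_castSucc _ _ le_rfl, topVar_insertMax_of_succ_eq rfl,
    topVar_insertMax_of_castSucc_eq (Fin.succ_castSucc t).symm, map_prod]
  rw [mul_left_comm, mul_assoc]
  congr 2
  refine prod_congr rfl fun k hk => ?_
  have hkt : k ≠ t := ne_of_mem_erase hk
  rw [rename_X, topVar_insertMax_of_succAbove] <;>
    · simp only [Fin.ext_iff, Fin.succAbove, Fin.lt_def, Fin.val_castSucc, Fin.val_succ] at hkt ⊢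
      split_ifs <;> simp only [Fin.val_castSucc, Fin.val_succ] at * <;> omega

end InsertMax

theorem mvEulerian_succ (n : ℕ) :
    mvEulerian (n + 1) =
      (X (.inl (Fin.last (n + 1))) + X (.inr (Fin.last (n + 1)))) *
          rename (Sum.map Fin.castSucc Fin.castSucc) (mvEulerian n) +
        X (.inl (Fin.last (n + 1))) * X (.inr (Fin.last (n + 1))) *
          rename (Sum.map Fin.castSucc Fin.castSucc) (∑ u, pderiv u (mvEulerian n)) := by
  rw [sum_pderiv_mvEulerian, mvEulerian_eq_sum_prod_X_topVar, mvEulerian_eq_sum_prod_X_topVar,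
    ← (insertMax_bijective n).sum_comp, Fintype.sum_prod_type, Fin.sum_univ_succ,
    Fin.sum_univ_castSucc, Fin.succ_last]
  simp only [prod_X_topVar_insertMax_zero, prod_X_topVar_insertMax_last,
    prod_X_topVar_insertMax_castSucc_succ, map_sum, ← mul_sum]
  rw [sum_comm (s := univ (α := Fin n))]
  ring

theorem eval_map_mvEulerian_ne_zero (n : ℕ) {z : Fin (n + 1) ⊕ Fin (n + 1) → ℂ}
    (hz : ∀ u, 0 < (z u).im) : eval z (map (algebraMap ℝ ℂ) (mvEulerian n)) ≠ 0 := by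
  induction n with
  | zero => simp [mvEulerian_eq_sum_prod_X_topVar]
  | succ n ih =>
    have key := add_mul_eval_add_mul_sum_eval_pderiv_ne_zero (fun _ => ih)
      (z := z ∘ Sum.map Fin.castSucc Fin.castSucc) (fun u => hz _)
      (hz (.inl (Fin.last (n + 1)))) (hz (.inr (Fin.last (n + 1))))
    rw [mvEulerian_succ]
    simpa [pderiv_map, eval₂_rename] using key

theorem stmt14_general (n : ℕ) :
    IsStable (MvPolynomial.map (algebraMap ℝ ℂ) (mvEulerian n)) :=
  Or.inr fun _ => eval_map_mvEulerian_ne_zero n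

/-- For every `n ≥ 1`, the multivariate Eulerian polynomial `A_n(x,y)` (which has real
coefficients) is real stable. -/
theorem stmt14 (n : ℕ) (hn : 1 ≤ n) :
    IsStable (MvPolynomial.map (algebraMap ℝ ℂ) (mvEulerian n)) :=
  stmt14_general n
end

section
/- For every n ≥ 1, the polynomial A_n(x,1) = Σ_{σ ∈ S_{n+1}} ∏_{i ∈ DT(σ)} x_i, obtained from the multivariate Eulerian polynomial by setting all ascent-top variables equal to 1, is a real zero polynomial in the variables x_2,...,x_{n+1}. -/
/-- The polynomial `A_n(x,1) = Σ_{σ ∈ S_{n+1}} ∏_{i ∈ DT(σ)} x_i`, obtained from the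
multivariate Eulerian polynomial by setting all ascent-top variables equal to `1`. -/
noncomputable def mvEulerianDesc (n : ℕ) : MvPolynomial (Fin (n + 1)) ℝ :=
  ∑ σ : Equiv.Perm (Fin (n + 1)), ∏ i ∈ descentTops n σ, MvPolynomial.X i

/-!
Build the permutations of `0, …, n` by inserting the smallest value `0` into a permutation of
`1, …, n`: inserting it in front keeps the descent tops, inserting it right after the value `v`
adds `v` to them. Weight a permutation by `y_v X` for each descent top `v` and by
`1 + y_v (X - 1)` for each other nonzero value `v`. The sum `P_n(y)` of these weights satisfies
`P_n(y)(1) = A_n(y, 1)`, and by the product rule `P_{n+1}(y) = (X (1 + y_1 (X - 1)) P_n(y'))'`,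
where `y'` is `y` without `y_1`.

For `y = z a` with `a` real and `Im z > 0`, every root of `P_n` lies in the closed half-plane
`Im (z (w - 1)) ≤ 0` and differs from `1`. Multiplying by `X (1 + y_1 (X - 1))` adds the root `0`,
strictly inside, and a root on the boundary line other than `1`; differentiating keeps the roots
there by the logarithmic-derivative argument behind Gauss–Lucas, the root `0` making the
inequality strict at roots of the derivative that are not roots of the polynomial. Hence
`A_n(z a, 1) = P_n(1) ≠ 0`, and the case `Im z < 0` follows by conjugation.
-/

open Equiv Equiv.Perm Finset Polynomial ComplexConjugate

lemma Fin.val_succAbove_cases {n : ℕ} (p : Fin (n + 1)) (i : Fin n) :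
    ((i : ℕ) < p ∧ (p.succAbove i : ℕ) = i) ∨ ((p : ℕ) ≤ i ∧ (p.succAbove i : ℕ) = i + 1) := by
  rcases lt_or_ge i.castSucc p with h | h
  · exact Or.inl ⟨h, by rw [Fin.succAbove_of_castSucc_lt _ _ h, Fin.val_castSucc]⟩
  · exact Or.inr ⟨h, by rw [Fin.succAbove_of_le_castSucc _ _ h, Fin.val_succ]⟩

lemma mem_descentTops_iff {n : ℕ} {σ : Perm (Fin (n + 1))} {v : Fin (n + 1)} :
    v ∈ descentTops n σ ↔ ∃ a b : Fin (n + 1), (b : ℕ) = a + 1 ∧ σ b < σ a ∧ σ a = v := by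
  simp only [descentTops, mem_image, mem_filter, mem_univ, true_and]
  constructor
  · rintro ⟨i, hlt, rfl⟩
    exact ⟨i.castSucc, i.succ, rfl, hlt, rfl⟩
  · rintro ⟨a, b, hab, hlt, rfl⟩
    have ha : (a : ℕ) < n := by omega
    have hcast : (⟨a, ha⟩ : Fin n).castSucc = a := rfl
    have hsucc : (⟨a, ha⟩ : Fin n).succ = b := Fin.ext hab.symm
    exact ⟨⟨a, ha⟩, by rwa [hcast, hsucc], rfl⟩

lemma zero_notMem_descentTops {n : ℕ} (σ : Perm (Fin (n + 1))) : 0 ∉ descentTops n σ := by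
  rw [mem_descentTops_iff]
  rintro ⟨a, b, -, hlt, hzero⟩
  exact Fin.not_lt_zero _ (hzero ▸ hlt)

namespace Equiv.Perm

variable {m : ℕ}

/-- The word of `τ` with every value raised by one and `0` inserted at position `j`. -/
def insertZeroAt (j : Fin (m + 2)) (τ : Perm (Fin (m + 1))) : Perm (Fin (m + 2)) :=
  (finSuccEquiv (m + 1)).symm.permCongr τ.optionCongr * j.cycleRange

@[simp] lemma insertZeroAt_apply_self (j : Fin (m + 2)) (τ : Perm (Fin (m + 1))) :
    insertZeroAt j τ j = 0 := by
  simp [insertZeroAt, Equiv.permCongr_apply]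

@[simp] lemma insertZeroAt_apply_succAbove (j : Fin (m + 2)) (τ : Perm (Fin (m + 1)))
    (i : Fin (m + 1)) : insertZeroAt j τ (j.succAbove i) = (τ i).succ := by
  simp [insertZeroAt, Equiv.permCongr_apply]

lemma insertZeroAt_bijective :
    Function.Bijective fun p : Fin (m + 2) × Perm (Fin (m + 1)) => insertZeroAt p.1 p.2 := by
  refine (Fintype.bijective_iff_injective_and_card _).mpr
    ⟨?_, by simp [Fintype.card_perm, Nat.factorial_succ]⟩
  rintro ⟨j, τ⟩ ⟨j', τ'⟩ h
  simp only at h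
  obtain rfl : j = j' := by
    by_contra hne
    obtain ⟨i, rfl⟩ := Fin.exists_succAbove_eq hne
    have := insertZeroAt_apply_self (j'.succAbove i) τ
    rw [h, insertZeroAt_apply_succAbove] at this
    exact Fin.succ_ne_zero _ this
  obtain rfl : τ = τ' := Equiv.ext fun i => Fin.succ_injective _ <| by
    rw [← insertZeroAt_apply_succAbove j τ, h, insertZeroAt_apply_succAbove]
  rfl

lemma succ_mem_descentTops_insertZeroAt {j : Fin (m + 2)} {τ : Perm (Fin (m + 1))}
    {v : Fin (m + 1)} :
    v.succ ∈ descentTops (m + 1) (insertZeroAt j τ) ↔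
      v ∈ descentTops m τ ∨ ∃ k, j = k.succ ∧ τ k = v := by
  simp only [mem_descentTops_iff]
  constructor
  · rintro ⟨a, b, hab, hlt, hv⟩
    obtain rfl | ⟨a, rfl⟩ := Fin.eq_self_or_eq_succAbove j a
    · exact absurd hv (by simp [(Fin.succ_ne_zero v).symm])
    rw [insertZeroAt_apply_succAbove, Fin.succ_inj] at hv
    obtain rfl | ⟨b, rfl⟩ := Fin.eq_self_or_eq_succAbove j b
    · refine Or.inr ⟨a, Fin.ext ?_, hv⟩
      rcases Fin.val_succAbove_cases b a with h | h <;> simp only [Fin.val_succ] <;> omega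
    · rw [insertZeroAt_apply_succAbove, insertZeroAt_apply_succAbove, Fin.succ_lt_succ_iff] at hlt
      refine Or.inl ⟨a, b, ?_, hlt, hv⟩
      rcases Fin.val_succAbove_cases j a with ha | ha <;>
        rcases Fin.val_succAbove_cases j b with hb | hb <;> omega
  · rintro (⟨a, b, hab, hlt, rfl⟩ | ⟨k, rfl, rfl⟩)
    · by_cases hj : (j : ℕ) = a + 1
      · refine ⟨j.succAbove a, j, ?_, by simp [Fin.succ_pos], by simp⟩
        rcases Fin.val_succAbove_cases j a with ha | ha <;> omega
      · refine ⟨j.succAbove a, j.succAbove b, ?_, by simpa using hlt, by simp⟩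
        rcases Fin.val_succAbove_cases j a with ha | ha <;>
          rcases Fin.val_succAbove_cases j b with hb | hb <;> omega
    · refine ⟨k.succ.succAbove k, k.succ, by simp, ?_, insertZeroAt_apply_succAbove _ _ _⟩
      rw [insertZeroAt_apply_self, insertZeroAt_apply_succAbove]
      exact Fin.succ_pos _

end Equiv.Perm

section DescentWeight

variable {R ι : Type*} [CommRing R] [Fintype ι] [DecidableEq ι]

noncomputable def descentWeight (y : ι → R) (S : Finset ι) : R[X] :=
  ∏ i, if i ∈ S then C (y i) * X else C (1 - y i) + C (y i) * X

lemma derivative_X_mul_descentWeight (y : ι → R) (S : Finset ι) :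
    derivative (X * descentWeight y S) = descentWeight y S + ∑ i, descentWeight y (insert i S) := by
  rw [derivative_mul, derivative_X, one_mul, descentWeight, derivative_prod_finset, mul_sum]
  congr 1
  refine sum_congr rfl fun i _ => ?_
  have hfactor : derivative (if i ∈ S then C (y i) * X else C (1 - y i) + C (y i) * X) =
      C (y i) := by
    split_ifs <;> simp
  have hrest : ∀ j ∈ univ.erase i,
      (if j ∈ S then C (y j) * X else C (1 - y j) + C (y j) * X) =
        if j ∈ insert i S then C (y j) * X else C (1 - y j) + C (y j) * X := fun j hj => by
    simp only [mem_insert, ne_of_mem_erase hj, false_or]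
  rw [hfactor, descentWeight, ← mul_prod_erase _ _ (mem_univ i), if_pos (mem_insert_self i S),
    prod_congr rfl hrest]
  ring

lemma eval_one_descentWeight (y : ι → R) (S : Finset ι) :
    (descentWeight y S).eval 1 = ∏ i ∈ S, y i := by
  simp only [descentWeight, eval_prod, apply_ite (eval (1 : R)), eval_mul, eval_add, eval_C,
    eval_X, mul_one, sub_add_cancel, prod_ite_mem, univ_inter]

end DescentWeight

def positiveDescentTops (n : ℕ) (σ : Perm (Fin (n + 1))) : Finset (Fin n) :=
  univ.filter fun i => i.succ ∈ descentTops n σ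

lemma prod_descentTops {M : Type*} [CommMonoid M] {n : ℕ} (σ : Perm (Fin (n + 1)))
    (x : Fin (n + 1) → M) :
    ∏ i ∈ descentTops n σ, x i = ∏ i ∈ positiveDescentTops n σ, x i.succ := by
  have hmap : descentTops n σ = (positiveDescentTops n σ).map (Fin.succEmb n) := by
    ext v
    cases v using Fin.cases with
    | zero => simp [zero_notMem_descentTops, Fin.succ_ne_zero]
    | succ v => simp [positiveDescentTops]
  rw [hmap, prod_map]
  rfl

lemma positiveDescentTops_insertZeroAt_zero {m : ℕ} (τ : Perm (Fin (m + 1))) :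
    positiveDescentTops (m + 1) (insertZeroAt 0 τ) = descentTops m τ := by
  ext v
  simp [positiveDescentTops, succ_mem_descentTops_insertZeroAt, (Fin.succ_ne_zero _).symm]

lemma positiveDescentTops_insertZeroAt_succ {m : ℕ} (k : Fin (m + 1)) (τ : Perm (Fin (m + 1))) :
    positiveDescentTops (m + 1) (insertZeroAt k.succ τ) = insert (τ k) (descentTops m τ) := by
  ext v
  simp [positiveDescentTops, succ_mem_descentTops_insertZeroAt, or_comm, eq_comm]

section DescentTopPoly

variable {R : Type*} [CommRing R]

noncomputable def descentTopPoly (n : ℕ) (y : Fin n → R) : R[X] :=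
  ∑ σ : Perm (Fin (n + 1)), descentWeight y (positiveDescentTops n σ)

lemma descentTopPoly_zero (y : Fin 0 → R) : descentTopPoly 0 y = 1 := by
  simp [descentTopPoly, descentWeight]

lemma descentWeight_descentTops {m : ℕ} (y : Fin (m + 1) → R) (τ : Perm (Fin (m + 1))) :
    descentWeight y (descentTops m τ) =
      (C (1 - y 0) + C (y 0) * X) * descentWeight (Fin.tail y) (positiveDescentTops m τ) := by
  rw [descentWeight, Fin.prod_univ_succ, if_neg (zero_notMem_descentTops τ)]
  simp [descentWeight, positiveDescentTops, Fin.tail]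

lemma descentTopPoly_succ {m : ℕ} (y : Fin (m + 1) → R) :
    descentTopPoly (m + 1) y =
      derivative (X * (C (1 - y 0) + C (y 0) * X) * descentTopPoly m (Fin.tail y)) := by
  calc descentTopPoly (m + 1) y
      = ∑ p : Fin (m + 2) × Perm (Fin (m + 1)),
          descentWeight y (positiveDescentTops (m + 1) (insertZeroAt p.1 p.2)) :=
        (Fintype.sum_bijective _ insertZeroAt_bijective _ _ fun _ => rfl).symm
    _ = ∑ τ : Perm (Fin (m + 1)), derivative (X * descentWeight y (descentTops m τ)) := by
        rw [Fintype.sum_prod_type, sum_comm]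
        refine sum_congr rfl fun τ _ => ?_
        rw [Fin.sum_univ_succ, derivative_X_mul_descentWeight]
        simp only [positiveDescentTops_insertZeroAt_zero, positiveDescentTops_insertZeroAt_succ]
        rw [Equiv.sum_comp τ fun u => descentWeight y (insert u (descentTops m τ))]
    _ = _ := by
        simp only [descentWeight_descentTops, descentTopPoly, mul_sum, derivative_sum, mul_assoc]

lemma eval_one_descentTopPoly (n : ℕ) (y : Fin n → R) :
    (descentTopPoly n y).eval 1 = ∑ σ : Perm (Fin (n + 1)), ∏ i ∈ positiveDescentTops n σ, y i := by
  simp only [descentTopPoly, eval_finsetSum, eval_one_descentWeight]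

end DescentTopPoly

lemma Complex.im_mul_conj_inv (z s : ℂ) : (z * conj s⁻¹).im = (z * s).im / Complex.normSq s := by
  rw [Complex.inv_def, map_mul, Complex.conj_conj, Complex.conj_ofReal, ← mul_assoc,
    Complex.im_mul_ofReal, div_eq_mul_inv]

lemma Polynomial.im_mul_sub_neg_of_eval_derivative_eq_zero {Q : ℂ[X]} {z c w r₀ : ℂ}
    (hroots : ∀ r ∈ Q.roots, (z * (r - c)).im ≤ 0) (hr₀ : r₀ ∈ Q.roots)
    (hr₀c : (z * (r₀ - c)).im < 0) (hQ'w : Q.derivative.eval w = 0) (hQw : Q.eval w ≠ 0) :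
    (z * (w - c)).im < 0 := by
  by_contra! hwc
  have hgap : ∀ r, (z * (w - r)).im = (z * (w - c)).im - (z * (r - c)).im := fun r => by
    rw [← Complex.sub_im]; ring_nf
  set f : ℂ → ℝ := fun r => (z * (w - r)).im / Complex.normSq (w - r)
  have hsum_pos : 0 < (Q.roots.map f).sum := by
    have hw₀ : w - r₀ ≠ 0 := sub_ne_zero.mpr fun h => hQw (h ▸ (mem_roots'.mp hr₀).2)
    rw [← Multiset.cons_erase hr₀, Multiset.map_cons, Multiset.sum_cons]
    refine add_pos_of_pos_of_nonneg (div_pos (by linarith [hgap r₀]) (Complex.normSq_pos.mpr hw₀))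
      (Multiset.sum_nonneg fun t ht => ?_)
    obtain ⟨r, hr, rfl⟩ := Multiset.mem_map.mp ht
    exact div_nonneg (by linarith [hgap r, hroots r (Multiset.mem_of_mem_erase hr)])
      (Complex.normSq_nonneg _)
  have hsum_zero : (Q.roots.map fun r => 1 / (w - r)).sum = 0 := by
    have hlog := (IsAlgClosed.splits Q).eval_derivative_eq_eval_mul_sum hQw
    rw [hQ'w] at hlog
    exact (mul_eq_zero.mp hlog.symm).resolve_left hQw
  have hsum_eq : (Q.roots.map f).sum = (z * conj (Q.roots.map fun r => 1 / (w - r)).sum).im := by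
    rw [map_multiset_sum, ← Multiset.sum_map_mul_left]
    change _ = Complex.imAddGroupHom _
    rw [map_multiset_sum, Multiset.map_map, Multiset.map_map]
    refine congrArg _ (Multiset.map_congr rfl fun r _ => ?_)
    simp only [f, Function.comp_apply, one_div]
    exact (Complex.im_mul_conj_inv z (w - r)).symm
  rw [hsum_eq, hsum_zero] at hsum_pos
  simp at hsum_pos

def RootsIn (S : Set ℂ) (P : ℂ[X]) : Prop :=
  P ≠ 0 ∧ ∀ w, P.IsRoot w → w ∈ S

lemma RootsIn.mul {S : Set ℂ} {P Q : ℂ[X]} (hP : RootsIn S P) (hQ : RootsIn S Q) :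
    RootsIn S (P * Q) :=
  ⟨mul_ne_zero hP.1 hQ.1, fun w hw => (root_mul.mp hw).elim (hP.2 w) (hQ.2 w)⟩

lemma rootsIn_X {S : Set ℂ} (h : (0 : ℂ) ∈ S) : RootsIn S X :=
  ⟨X_ne_zero, fun w hw => by rw [IsRoot.def, eval_X] at hw; rwa [hw]⟩

def halfPlaneOffOne (z : ℂ) : Set ℂ := {w | (z * (w - 1)).im ≤ 0 ∧ w ≠ 1}

lemma rootsIn_halfPlaneOffOne_C_add_C_mul_X (z : ℂ) (α : ℝ) :
    RootsIn (halfPlaneOffOne z) (C (1 - z * α) + C (z * α) * X) := by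
  have heval : ∀ w, (C (1 - z * α) + C (z * α) * X).eval w = 1 + α * (z * (w - 1)) := fun w => by
    simp only [eval_add, eval_mul, eval_C, eval_X]; ring
  refine ⟨fun h => by simpa [heval] using congrArg (eval 1) h, fun w hw => ?_⟩
  rw [IsRoot.def, heval] at hw
  have him : α * (z * (w - 1)).im = 0 := by
    rw [← Complex.im_ofReal_mul, eq_neg_of_add_eq_zero_right hw, Complex.neg_im, Complex.one_im,
      neg_zero]
  have hα : α ≠ 0 := by rintro rfl; simp at hw
  refine ⟨(mul_eq_zero.mp him).resolve_left hα |>.le, ?_⟩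
  rintro rfl
  simp at hw

lemma RootsIn.derivative {z : ℂ} (hz : 0 < z.im) {Q : ℂ[X]} (hQ : RootsIn (halfPlaneOffOne z) Q)
    (h0 : Q.IsRoot 0) : RootsIn (halfPlaneOffOne z) (derivative Q) := by
  refine ⟨fun h => ?_, fun w hw => ?_⟩
  · have := natDegree_pos_iff_degree_pos.mpr (degree_pos_of_root hQ.1 h0)
    rw [derivative_eq_zero] at h
    omega
  by_cases hQw : Q.IsRoot w
  · exact hQ.2 w hQw
  have hneg := im_mul_sub_neg_of_eval_derivative_eq_zero (c := 1)
    (fun r hr => (hQ.2 r (isRoot_of_mem_roots hr)).1) ((mem_roots hQ.1).mpr h0)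
    (by simpa using hz) hw hQw
  exact ⟨hneg.le, by rintro rfl; simp at hneg⟩

lemma rootsIn_descentTopPoly {z : ℂ} (hz : 0 < z.im) (n : ℕ) (a : Fin n → ℝ) :
    RootsIn (halfPlaneOffOne z) (descentTopPoly n fun i => z * a i) := by
  induction n with
  | zero =>
    rw [descentTopPoly_zero]
    exact ⟨one_ne_zero, fun w hw => absurd hw (by simp)⟩
  | succ m ih =>
    rw [descentTopPoly_succ]
    refine RootsIn.derivative hz ?_ (by simp)
    exact ((rootsIn_X (by simpa [halfPlaneOffOne] using hz.le)).mul
      (rootsIn_halfPlaneOffOne_C_add_C_mul_X z (a 0))).mul (ih (Fin.tail a))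

lemma sum_prod_descentTops_ne_zero {z : ℂ} (hz : 0 < z.im) {n : ℕ} (a : Fin (n + 1) → ℝ) :
    ∑ σ : Perm (Fin (n + 1)), ∏ i ∈ descentTops n σ, z * (a i : ℂ) ≠ 0 := by
  simp only [prod_descentTops _ fun i => z * (a i : ℂ)]
  rw [← eval_one_descentTopPoly n fun i => z * (a i.succ : ℂ)]
  exact fun h => ((rootsIn_descentTopPoly hz n (Fin.tail a)).2 1 h).2 rfl

theorem stmt15_general (n : ℕ) :
    ∀ a : Fin (n + 1) → ℝ, ∀ z : ℂ,
      MvPolynomial.eval (fun i => z * (a i : ℂ))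
        (MvPolynomial.map (algebraMap ℝ ℂ) (mvEulerianDesc n)) = 0 → z.im = 0 := by
  intro a z h
  simp only [mvEulerianDesc, map_sum, map_prod, MvPolynomial.map_X, MvPolynomial.eval_X] at h
  rcases lt_trichotomy z.im 0 with hneg | hzero | hpos
  · have hconj := congrArg conj h
    simp only [map_sum, map_prod, map_mul, Complex.conj_ofReal, map_zero] at hconj
    exact absurd hconj (sum_prod_descentTops_ne_zero (by simpa using hneg) a)
  · exact hzero
  · exact absurd h (sum_prod_descentTops_ne_zero hpos a)

/-- For every `n ≥ 1`, the polynomial `A_n(x,1)` is a real zero polynomial: for every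
`a ∈ ℝ^{n+1}` and every `λ ∈ ℂ`, `A_n(λa,1) = 0` implies `λ ∈ ℝ`. -/
theorem stmt15 (n : ℕ) (hn : 1 ≤ n) :
    ∀ a : Fin (n + 1) → ℝ, ∀ z : ℂ,
      MvPolynomial.eval (fun i => z * (a i : ℂ))
        (MvPolynomial.map (algebraMap ℝ ℂ) (mvEulerianDesc n)) = 0 → z.im = 0 :=
  stmt15_general n
end

section
/- Let n ≥ 1. For any x_1 ∈ {1,...,n+1}, the number of permutations σ ∈ S_{n+1} with descent top set exactly {x_1} equals 2^{x_1 − 1} − 1. For any x_1 < x_2 in {1,...,n+1}, the number of permutations σ ∈ S_{n+1} with descent top set exactly {x_1, x_2} equals 3^{x_1−1}·2^{x_2−x_1} − (2^{x_1−1} + 2^{x_2−1}) + 1. -/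
/-!
Count first the permutations whose descent tops all lie in a given set `T`. In an arrangement of
a finite set of values, deleting the smallest value `m` leaves the other descent tops unchanged,
and `m` itself is never a descent top while the entry just before it always is. So `m` can be
put in front or right after any entry lying in `T`, and induction on the set of values gives
`∏ v, (1 + #{w ∈ T | v < w})` arrangements. For `T = {x}` and `T = {x, y}` this is `2 ^ x` and
`3 ^ x * 2 ^ (y - x)` (with `x, y` counted from `0`); the exact counts then follow by
inclusion–exclusion over the subsets of `T`.
-/

open Finset

namespace List

section DescentTops

variable {α : Type*} [LinearOrder α]

def descentTops : List α → Finset α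
  | [] => ∅
  | [_] => ∅
  | a :: b :: t => if b < a then insert a (b :: t).descentTops else (b :: t).descentTops

@[simp] theorem descentTops_nil : ([] : List α).descentTops = ∅ := rfl

@[simp] theorem descentTops_singleton (a : α) : [a].descentTops = ∅ := rfl

theorem descentTops_cons_cons (a b : α) (t : List α) :
    (a :: b :: t).descentTops =
      if b < a then insert a (b :: t).descentTops else (b :: t).descentTops := rfl

theorem descentTops_cons_of_forall_lt {m : α} {l : List α} (hm : ∀ a ∈ l, m < a) :
    (m :: l).descentTops = l.descentTops := by
  cases l with
  | nil => rfl
  | cons b t => rw [descentTops_cons_cons, if_neg (hm b mem_cons_self).not_gt]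

theorem insert_descentTops_cons (a : α) (l : List α) :
    insert a (a :: l).descentTops = insert a l.descentTops := by
  cases l with
  | nil => rfl
  | cons b t => rw [descentTops_cons_cons]; split_ifs <;> simp

theorem descentTops_insertIdx_succ {m : α} {l : List α} (hm : ∀ a ∈ l, m < a) {p : ℕ}
    (hp : p < l.length) : (l.insertIdx (p + 1) m).descentTops = insert l[p] l.descentTops := by
  induction l generalizing p with
  | nil => simp at hp
  | cons a t ih =>
    rw [forall_mem_cons] at hm
    cases p with
    | zero =>
      rw [insertIdx_succ_cons, insertIdx_zero, descentTops_cons_cons, if_pos hm.1,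
        descentTops_cons_of_forall_lt hm.2, getElem_cons_zero, insert_descentTops_cons]
    | succ p =>
      obtain ⟨b, t, rfl⟩ := exists_cons_of_length_pos (by simp at hp; omega : 0 < t.length)
      have ih := ih hm.2 (p := p) (by simpa using hp)
      rw [insertIdx_succ_cons] at ih
      rw [insertIdx_succ_cons, insertIdx_succ_cons, descentTops_cons_cons, ih,
        descentTops_cons_cons, getElem_cons_succ]
      split_ifs <;> simp [Finset.insert_comm]

theorem descentTops_subset_insertIdx {m : α} {l : List α} (hm : ∀ a ∈ l, m < a) {p : ℕ}
    (hp : p ≤ l.length) : l.descentTops ⊆ (l.insertIdx p m).descentTops := by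
  cases p with
  | zero => rw [insertIdx_zero, descentTops_cons_of_forall_lt hm]
  | succ p => rw [descentTops_insertIdx_succ hm hp]; exact Finset.subset_insert _ _

theorem descentTops_ofFn : ∀ {k : ℕ} (f : Fin (k + 1) → α),
    (ofFn f).descentTops = ({i : Fin k | f i.succ < f i.castSucc} : Finset _).image (f ·.castSucc)
  | 0, f => by simp
  | k + 1, f => by
    have ih := descentTops_ofFn (fun i => f i.succ)
    rw [ofFn_succ] at ih
    rw [ofFn_succ, ofFn_succ, descentTops_cons_cons, ih, Fin.univ_succ, Finset.cons_eq_insert,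
      Finset.filter_insert, Fin.castSucc_zero, Finset.filter_map, Finset.map_eq_image]
    split_ifs <;> simp only [Finset.image_insert, Finset.image_image] <;> rfl

end DescentTops

section InsertIdx

variable {α : Type*} [DecidableEq α]

theorem idxOf_insertIdx_of_notMem {m : α} {l : List α} (hm : m ∉ l) {p : ℕ}
    (hp : p ≤ l.length) : (l.insertIdx p m).idxOf m = p := by
  induction l generalizing p with
  | nil => simp at hp; subst hp; simp
  | cons a t ih =>
    rw [mem_cons, not_or] at hm
    cases p with
    | zero => simp
    | succ p =>
      rw [insertIdx_succ_cons, idxOf_cons_ne _ (Ne.symm hm.1), ih hm.2 (by simpa using hp)]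

theorem erase_insertIdx_of_notMem {m : α} {l : List α} (hm : m ∉ l) {p : ℕ}
    (hp : p ≤ l.length) : (l.insertIdx p m).erase m = l := by
  rw [erase_eq_eraseIdx_of_idxOf (idxOf_insertIdx_of_notMem hm hp), eraseIdx_insertIdx_self]

theorem insertIdx_idxOf_erase {m : α} {l : List α} (hm : m ∈ l) :
    (l.erase m).insertIdx (l.idxOf m) m = l := by
  have hlt : l.idxOf m < l.length := idxOf_lt_length_iff.2 hm
  have h := insertIdx_eraseIdx_getElem hlt
  rwa [getElem_idxOf hlt, ← erase_eq_eraseIdx_of_idxOf rfl] at h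

end InsertIdx

end List

namespace Finset

variable {α : Type*}

def lists (S : Finset α) : Finset (List α) := ⟨S.val.lists, Multiset.lists_nodup_finset S⟩

theorem mem_lists {S : Finset α} {l : List α} : l ∈ S.lists ↔ S.val = l :=
  Multiset.mem_lists_iff _ _

theorem lists_empty : (∅ : Finset α).lists = {[]} := by
  ext l
  simp [mem_lists, eq_comm]

theorem nodup_of_mem_lists {S : Finset α} {l : List α} (hl : l ∈ S.lists) : l.Nodup := by
  rw [mem_lists] at hl
  exact Multiset.coe_nodup.1 (hl ▸ S.nodup)

theorem mem_of_mem_lists {S : Finset α} {l : List α} (hl : l ∈ S.lists) {a : α} :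
    a ∈ l ↔ a ∈ S := by
  rw [mem_lists] at hl
  rw [← mem_val, hl, Multiset.mem_coe]

theorem toFinset_of_mem_lists [DecidableEq α] {S : Finset α} {l : List α} (hl : l ∈ S.lists) :
    l.toFinset = S := by
  ext a
  rw [List.mem_toFinset, mem_of_mem_lists hl]

theorem erase_mem_lists_of_mem_lists_insert [DecidableEq α] {m : α} {S : Finset α}
    (hmS : m ∉ S) {l : List α} (hl : l ∈ (insert m S).lists) : l.erase m ∈ S.lists := by
  rw [mem_lists] at hl ⊢
  rw [← Multiset.coe_erase, ← hl, insert_val_of_notMem hmS, Multiset.erase_cons_head]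

theorem insertIdx_mem_lists_insert [DecidableEq α] {m : α} {S : Finset α} (hmS : m ∉ S)
    {l : List α} (hl : l ∈ S.lists) {p : ℕ} (hp : p ≤ l.length) :
    l.insertIdx p m ∈ (insert m S).lists := by
  rw [mem_lists] at hl ⊢
  rw [insert_val_of_notMem hmS, hl, Multiset.coe_eq_coe.2 (List.perm_insertIdx m l hp),
    Multiset.cons_coe]

theorem ofFn_mem_lists_univ {k : ℕ} (σ : Equiv.Perm (Fin k)) :
    List.ofFn σ ∈ (univ : Finset (Fin k)).lists := by
  rw [mem_lists,
    Multiset.Nodup.ext univ.nodup (Multiset.coe_nodup.2 (List.nodup_ofFn.2 σ.injective))]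
  simpa [List.mem_ofFn] using fun a => σ.surjective a

theorem sum_powerset_card_filter_eq {ι : Type*} [DecidableEq α] (s : Finset ι)
    (f : ι → Finset α) (T : Finset α) :
    ∑ U ∈ T.powerset, #{x ∈ s | f x = U} = #{x ∈ s | f x ⊆ T} := by
  rw [card_eq_sum_card_fiberwise (f := f) (t := T.powerset)
    fun x hx => mem_powerset.2 (mem_filter.1 hx).2]
  refine sum_congr rfl fun U hU => ?_
  rw [filter_filter]
  exact congrArg card
    (filter_congr fun x _ => ⟨fun hx => ⟨hx ▸ mem_powerset.1 hU, hx⟩, And.right⟩)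

theorem sum_powerset_singleton {M : Type*} [DecidableEq α] [AddCommMonoid M]
    (f : Finset α → M) (x : α) : ∑ U ∈ ({x} : Finset α).powerset, f U = f ∅ + f {x} := by
  rw [← insert_empty_eq, sum_powerset_insert (notMem_empty x), powerset_empty, sum_singleton,
    sum_singleton]

theorem sum_powerset_pair {M : Type*} [DecidableEq α] [AddCommMonoid M]
    (f : Finset α → M) {x y : α} (hxy : x ≠ y) :
    ∑ U ∈ ({x, y} : Finset α).powerset, f U = f ∅ + f {x} + f {y} + f {x, y} := by
  rw [sum_powerset_insert (notMem_singleton.2 hxy), sum_powerset_singleton,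
    sum_powerset_singleton, insert_empty_eq]
  abel

end Finset

section Arrangements

variable {α : Type*} [LinearOrder α]

theorem card_filter_range_descentTops_insertIdx_subset {m : α} {l : List α} {T : Finset α}
    (hl : l.Nodup) (hm : ∀ a ∈ l, m < a) (hT : l.descentTops ⊆ T) :
    #{p ∈ range (l.length + 1) | (l.insertIdx p m).descentTops ⊆ T} =
      #(l.toFinset ∩ T) + 1 := by
  rw [card_filter, sum_range_succ', ← card_filter, List.insertIdx_zero,
    List.descentTops_cons_of_forall_lt hm, if_pos hT]
  congr 1
  refine card_bij (fun i hi => l[i]'(mem_range.1 (mem_filter.1 hi).1)) ?_ ?_ ?_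
  · intro i hi
    rw [mem_filter, mem_range] at hi
    rw [List.descentTops_insertIdx_succ hm hi.1, insert_subset_iff] at hi
    simp [hi.2.1]
  · intro i _ j _ hij
    exact hl.getElem_inj_iff.1 hij
  · intro a ha
    rw [mem_inter, List.mem_toFinset, List.mem_iff_getElem] at ha
    obtain ⟨⟨i, hi, rfl⟩, haT⟩ := ha
    refine ⟨i, ?_, rfl⟩
    rw [mem_filter, mem_range, List.descentTops_insertIdx_succ hm hi]
    exact ⟨hi, insert_subset haT hT⟩

theorem card_lists_insert_eq_card_sigma {m : α} {S T : Finset α} (hm : ∀ a ∈ S, m < a) :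
    #{l ∈ (insert m S).lists | l.descentTops ⊆ T} =
      #({l ∈ S.lists | l.descentTops ⊆ T}.sigma
        fun l => {p ∈ range (l.length + 1) | (l.insertIdx p m).descentTops ⊆ T}) := by
  have hmS : m ∉ S := fun h => lt_irrefl m (hm m h)
  have hlt : ∀ {l}, l ∈ S.lists → ∀ a ∈ l, m < a :=
    fun hl a ha => hm a ((mem_of_mem_lists hl).1 ha)
  have hnotMem : ∀ {l}, l ∈ S.lists → m ∉ l := fun hl h => hmS ((mem_of_mem_lists hl).1 h)
  refine card_nbij' (fun l => ⟨l.erase m, l.idxOf m⟩) (fun x => x.1.insertIdx x.2 m)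
    (fun l hl => ?_) (fun ⟨l, p⟩ hlp => ?_) (fun l hl => ?_) (fun ⟨l, p⟩ hlp => ?_)
  · simp only [mem_coe, mem_filter] at hl
    obtain ⟨hl, hT⟩ := hl
    have hml : m ∈ l := (mem_of_mem_lists hl).2 (mem_insert_self m S)
    have hl' := erase_mem_lists_of_mem_lists_insert hmS hl
    have hidx : l.idxOf m ≤ (l.erase m).length := by
      have := List.idxOf_lt_length_iff.2 hml
      rw [List.length_erase_of_mem hml]
      omega
    rw [← List.insertIdx_idxOf_erase hml] at hT
    simp only [mem_coe, mem_sigma, mem_filter, mem_range]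
    exact ⟨⟨hl', (List.descentTops_subset_insertIdx (hlt hl') hidx).trans hT⟩, by omega, hT⟩
  · simp only [mem_coe, mem_sigma, mem_filter, mem_range] at hlp ⊢
    exact ⟨insertIdx_mem_lists_insert hmS hlp.1.1 (by omega), hlp.2.2⟩
  · simp only [mem_coe, mem_filter] at hl
    exact List.insertIdx_idxOf_erase ((mem_of_mem_lists hl.1).2 (mem_insert_self m S))
  · simp only [mem_coe, mem_sigma, mem_filter, mem_range] at hlp
    have hp : p ≤ l.length := by omega
    simp only [List.erase_insertIdx_of_notMem (hnotMem hlp.1.1) hp,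
      List.idxOf_insertIdx_of_notMem (hnotMem hlp.1.1) hp]

theorem card_lists_insert_of_forall_lt {m : α} {S T : Finset α} (hm : ∀ a ∈ S, m < a) :
    #{l ∈ (insert m S).lists | l.descentTops ⊆ T} =
      #{l ∈ S.lists | l.descentTops ⊆ T} * (#(S ∩ T) + 1) := by
  rw [card_lists_insert_eq_card_sigma hm, card_sigma, sum_congr rfl fun l hl => ?_, sum_const,
    smul_eq_mul]
  rw [mem_filter] at hl
  rw [card_filter_range_descentTops_insertIdx_subset (nodup_of_mem_lists hl.1)
    (fun a ha => hm a ((mem_of_mem_lists hl.1).1 ha)) hl.2, toFinset_of_mem_lists hl.1]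

theorem card_lists_descentTops_subset (S T : Finset α) :
    #{l ∈ S.lists | l.descentTops ⊆ T} = ∏ v ∈ S, (#{w ∈ S ∩ T | v < w} + 1) := by
  induction S using Finset.induction_on_min with
  | empty =>
    rw [lists_empty, filter_singleton, List.descentTops_nil, if_pos (empty_subset T),
      card_singleton, prod_empty]
  | insert m S hm ih =>
    have hmS : m ∉ S := fun h => lt_irrefl m (hm m h)
    have hdrop : ∀ v, m ≤ v → {w ∈ insert m S ∩ T | v < w} = {w ∈ S ∩ T | v < w} := by
      intro v hv
      ext w
      simp only [mem_filter, mem_inter, mem_insert]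
      constructor
      · rintro ⟨⟨rfl | hw, hT⟩, hvw⟩
        exacts [absurd hvw hv.not_gt, ⟨⟨hw, hT⟩, hvw⟩]
      · rintro ⟨⟨hw, hT⟩, hvw⟩
        exact ⟨⟨Or.inr hw, hT⟩, hvw⟩
    have hall : {w ∈ S ∩ T | m < w} = S ∩ T :=
      filter_true_of_mem fun w hw => hm w (mem_inter.1 hw).1
    rw [card_lists_insert_of_forall_lt hm, ih, prod_insert hmS, hdrop m le_rfl, hall, mul_comm]
    exact congrArg _ (prod_congr rfl fun v hv => by rw [hdrop v (hm v hv).le])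

end Arrangements

theorem card_filter_perm_ofFn {k : ℕ} (P : List (Fin k) → Prop) [DecidablePred P] :
    #{σ : Equiv.Perm (Fin k) | P (List.ofFn σ)} =
      #{l ∈ (univ : Finset (Fin k)).lists | P l} := by
  refine card_bij (fun σ _ => List.ofFn σ) (fun σ hσ => ?_) (fun σ _ τ _ h => ?_)
    (fun l hl => ?_)
  · exact mem_filter.2 ⟨ofFn_mem_lists_univ σ, (mem_filter.1 hσ).2⟩
  · exact Equiv.coe_fn_injective (List.ofFn_injective h)
  · obtain ⟨hl, hP⟩ := mem_filter.1 hl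
    have hlen : l.length = k := by
      rw [← Multiset.coe_card, ← mem_lists.1 hl, card_val, card_univ, Fintype.card_fin]
    have hmem : ∀ a, a ∈ l := fun a => (mem_of_mem_lists hl).2 (mem_univ a)
    let σ := (finCongr hlen.symm).trans ((nodup_of_mem_lists hl).getEquivOfForallMemList l hmem)
    have hσ : List.ofFn σ = l :=
      List.ext_getElem (by simp [hlen]) fun i _ _ => by
        simp [σ, List.Nodup.getEquivOfForallMemList]
    exact ⟨σ, mem_filter.2 ⟨mem_univ _, hσ ▸ hP⟩, hσ⟩

theorem descentTops_eq_descentTops_ofFn {n : ℕ} (σ : Equiv.Perm (Fin (n + 1))) :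
    descentTops n σ = (List.ofFn σ).descentTops := by
  rw [List.descentTops_ofFn]
  rfl

theorem card_descentTops_subset {n : ℕ} (T : Finset (Fin (n + 1))) :
    #{σ : Equiv.Perm (Fin (n + 1)) | descentTops n σ ⊆ T} =
      ∏ v, (#{w ∈ T | v < w} + 1) := by
  simp only [descentTops_eq_descentTops_ofFn]
  rw [card_filter_perm_ofFn (fun l => l.descentTops ⊆ T), card_lists_descentTops_subset,
    univ_inter]

theorem prod_card_filter_lt_singleton_add_one {k : ℕ} (x : Fin k) :
    ∏ v, (#{w ∈ ({x} : Finset (Fin k)) | v < w} + 1) = 2 ^ (x : ℕ) := by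
  have hfactor : ∀ v, #{w ∈ ({x} : Finset (Fin k)) | v < w} + 1 = if v < x then 2 else 1 := by
    intro v
    rw [filter_singleton]
    split_ifs <;> rfl
  rw [prod_congr rfl fun v _ => hfactor v, prod_ite, prod_const, prod_const_one, mul_one,
    filter_gt_eq_Iio, Fin.card_Iio]

theorem prod_card_filter_lt_pair_add_one {k : ℕ} {x y : Fin k} (hxy : x < y) :
    ∏ v, (#{w ∈ ({x, y} : Finset (Fin k)) | v < w} + 1) =
      3 ^ (x : ℕ) * 2 ^ ((y : ℕ) - x) := by
  have hfactor : ∀ v, #{w ∈ ({x, y} : Finset (Fin k)) | v < w} + 1 =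
      if v < x then 3 else if v < y then 2 else 1 := by
    intro v
    rw [filter_insert, filter_singleton]
    by_cases hvx : v < x
    · rw [if_pos hvx, if_pos (hvx.trans hxy), card_pair hxy.ne, if_pos hvx]
    · rw [if_neg hvx, if_neg hvx]
      split_ifs <;> rfl
  have hIco : ({v | ¬v < x ∧ v < y} : Finset (Fin k)) = Ico x y := by
    ext v
    simp
  rw [prod_congr rfl fun v _ => hfactor v, prod_ite, prod_const, filter_gt_eq_Iio, Fin.card_Iio,
    prod_ite, prod_const, prod_const_one, mul_one, filter_filter, hIco, Fin.card_Ico]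

theorem stmt18_general (n : ℕ) :
    (∀ x : Fin (n + 1),
      ((Finset.univ.filter fun σ : Equiv.Perm (Fin (n + 1)) =>
          descentTops n σ = {x}).card : ℤ) = 2 ^ (((x : ℕ) + 1) - 1) - 1) ∧
    (∀ x y : Fin (n + 1), x < y →
      ((Finset.univ.filter fun σ : Equiv.Perm (Fin (n + 1)) =>
          descentTops n σ = {x, y}).card : ℤ) =
        3 ^ (((x : ℕ) + 1) - 1) * 2 ^ (((y : ℕ) + 1) - ((x : ℕ) + 1)) -
          (2 ^ (((x : ℕ) + 1) - 1) + 2 ^ (((y : ℕ) + 1) - 1)) + 1) := by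
  have hsum (T : Finset (Fin (n + 1))) :=
    (sum_powerset_card_filter_eq univ (descentTops n) T).trans (card_descentTops_subset T)
  have hempty := hsum ∅
  simp only [powerset_empty, sum_singleton, filter_empty, card_empty, zero_add, prod_const_one]
    at hempty
  have hsingle (x : Fin (n + 1)) := hsum {x}
  simp only [sum_powerset_singleton, prod_card_filter_lt_singleton_add_one] at hsingle
  refine ⟨fun x => ?_, fun x y hxy => ?_⟩
  · have hx := hsingle x
    rw [Nat.add_sub_cancel]
    zify at hempty hx
    linarith
  · have hpair := hsum {x, y}
    rw [sum_powerset_pair _ hxy.ne, prod_card_filter_lt_pair_add_one hxy] at hpair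
    have hx := hsingle x
    have hy := hsingle y
    rw [Nat.add_sub_cancel, Nat.add_sub_cancel, Nat.add_sub_add_right]
    zify at hempty hx hy hpair
    linarith

/-- Let `n ≥ 1`. For any `x₁ ∈ {1,...,n+1}` (where `x : Fin (n+1)` represents the value
`x + 1`), the number of `σ ∈ S_{n+1}` with `DT(σ) = {x₁}` equals `2^{x₁−1} − 1`; for any
`x₁ < x₂` the number of `σ ∈ S_{n+1}` with `DT(σ) = {x₁,x₂}` equals
`3^{x₁−1}·2^{x₂−x₁} − (2^{x₁−1} + 2^{x₂−1}) + 1`. -/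
theorem stmt18 (n : ℕ) (hn : 1 ≤ n) :
    (∀ x : Fin (n + 1),
      ((Finset.univ.filter fun σ : Equiv.Perm (Fin (n + 1)) =>
          descentTops n σ = {x}).card : ℤ) = 2 ^ (((x : ℕ) + 1) - 1) - 1) ∧
    (∀ x y : Fin (n + 1), x < y →
      ((Finset.univ.filter fun σ : Equiv.Perm (Fin (n + 1)) =>
          descentTops n σ = {x, y}).card : ℤ) =
        3 ^ (((x : ℕ) + 1) - 1) * 2 ^ (((y : ℕ) + 1) - ((x : ℕ) + 1)) -
          (2 ^ (((x : ℕ) + 1) - 1) + 2 ^ (((y : ℕ) + 1) - 1)) + 1) :=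
  stmt18_general n
end
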